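/- arXiv:math/0509543 — 7 statements merged into one kernel-verified Lean document; each statement's English description precedes it below -/
import Mathlib

section
/- Let G be a Euclidean space (i.e., ℝ^n as an additive group), and let L and H be closed cones in G (closed subsets stable under multiplication by nonnegative scalars). Then L ∩ (S + H + S) is bounded for every compact set S ⊆ G if and only if L ∩ H = {0}. -/
open Pointwise Filter Topology

/-- For closed cones `L`, `H` in Euclidean space `ℝⁿ`,
`L ∩ (S + H + S)` is bounded for every compact `S` iff `L ∩ H = {0}`. -/
theorem stmt_0 (n : ℕ) (L H : Set (EuclideanSpace ℝ (Fin n)))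
    (hLc : IsClosed L) (hL0 : (0 : EuclideanSpace ℝ (Fin n)) ∈ L)
    (hLcone : ∀ x ∈ L, ∀ t : ℝ, 0 ≤ t → t • x ∈ L)
    (hHc : IsClosed H) (hH0 : (0 : EuclideanSpace ℝ (Fin n)) ∈ H)
    (hHcone : ∀ x ∈ H, ∀ t : ℝ, 0 ≤ t → t • x ∈ H) :
    (∀ S : Set (EuclideanSpace ℝ (Fin n)), IsCompact S →
      Bornology.IsBounded (L ∩ (S + H + S))) ↔ L ∩ H = {0} := by
  constructor
  · intro hb
    have hset : ({0} + H + {0} : Set (EuclideanSpace ℝ (Fin n))) = H := by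
      simp [Set.add_singleton, Set.singleton_add]
    have hbd := hb {0} isCompact_singleton
    rw [hset, isBounded_iff_forall_norm_le] at hbd
    obtain ⟨C, hC⟩ := hbd
    apply Set.eq_singleton_iff_unique_mem.mpr
    refine ⟨⟨hL0, hH0⟩, ?_⟩
    intro x hx
    by_contra hx0
    have hxn : 0 < ‖x‖ := norm_pos_iff.mpr hx0
    set t : ℝ := (|C| + 1) / ‖x‖ with ht
    have ht0 : 0 ≤ t := div_nonneg (by positivity) hxn.le
    have hmem : t • x ∈ L ∩ H := ⟨hLcone x hx.1 t ht0, hHcone x hx.2 t ht0⟩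
    have := hC _ hmem
    rw [norm_smul, Real.norm_eq_abs, abs_of_nonneg ht0, ht,
      div_mul_cancel₀ _ hxn.ne'] at this
    have := le_abs_self C
    linarith
  · intro hLH S hS
    by_contra hub
    rw [isBounded_iff_forall_norm_le] at hub
    push_neg at hub
    choose x hxmem hxnorm using fun k : ℕ => hub ((k : ℝ) + 1)
    have hxpos : ∀ k, 0 < ‖x k‖ := fun k =>
      lt_trans (by positivity) (hxnorm k)
    have hdec : ∀ k : ℕ, ∃ s ∈ S, ∃ h ∈ H, ∃ s' ∈ S, s + h + s' = x k := by
      intro k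
      obtain ⟨a, ha, s', hs', hadd⟩ := Set.mem_add.mp (hxmem k).2
      obtain ⟨s, hs, h, hh, hah⟩ := Set.mem_add.mp ha
      exact ⟨s, hs, h, hh, s', hs', by rw [hah, hadd]⟩
    choose s hsS h hhH s' hs'S hsum using hdec
    have husphere : ∀ k, ‖x k‖⁻¹ • x k ∈ Metric.sphere (0 : EuclideanSpace ℝ (Fin n)) 1 := by
      intro k
      rw [mem_sphere_zero_iff_norm, norm_smul, norm_inv, norm_norm,
        inv_mul_cancel₀ (hxpos k).ne']
    obtain ⟨v, hv, φ, hφ, hconv⟩ :=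
      (isCompact_sphere (0 : EuclideanSpace ℝ (Fin n)) 1).tendsto_subseq husphere
    -- v ∈ L
    have hvL : v ∈ L := by
      refine hLc.mem_of_tendsto hconv (Filter.Eventually.of_forall fun k => ?_)
      exact hLcone _ (hxmem (φ k)).1 _ (inv_nonneg.mpr (hxpos (φ k)).le)
    -- ‖x (φ n)‖⁻¹ → 0
    have hr0 : Tendsto (fun k => ‖x (φ k)‖⁻¹) atTop (𝓝 0) := by
      apply squeeze_zero (fun k => inv_nonneg.mpr (hxpos (φ k)).le)
        (g := fun k : ℕ => 1 / ((k : ℝ) + 1))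
      · intro k
        rw [one_div]
        apply inv_anti₀ (by positivity)
        have hk : (k : ℝ) ≤ (φ k : ℝ) := Nat.cast_le.mpr hφ.le_apply
        linarith [(hxnorm (φ k)).le]
      · exact tendsto_one_div_add_atTop_nhds_zero_nat
    -- the boundary parts go to zero
    obtain ⟨C, hC⟩ := isBounded_iff_forall_norm_le.mp hS.isBounded
    have hzero : Tendsto (fun k => ‖x (φ k)‖⁻¹ • (s (φ k) + s' (φ k))) atTop
        (𝓝 (0 : EuclideanSpace ℝ (Fin n))) := by
      apply Filter.Tendsto.zero_smul_isBoundedUnder_le hr0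
      refine Filter.isBoundedUnder_of ⟨C + C, fun k => ?_⟩
      exact le_trans (norm_add_le _ _)
        (add_le_add (hC _ (hsS (φ k))) (hC _ (hs'S (φ k))))
    have hkey : Tendsto (fun k => ‖x (φ k)‖⁻¹ • h (φ k)) atTop (𝓝 v) := by
      have heq : ∀ k, ‖x (φ k)‖⁻¹ • h (φ k) =
          ((fun j => ‖x j‖⁻¹ • x j) ∘ φ) k - ‖x (φ k)‖⁻¹ • (s (φ k) + s' (φ k)) := by
        intro k
        rw [Function.comp_apply, eq_sub_iff_add_eq, ← smul_add]
        congr 1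
        rw [← hsum (φ k)]
        abel
      simp only [funext heq]
      simpa using hconv.sub hzero
    have hvH : v ∈ H := by
      refine hHc.mem_of_tendsto hkey (Filter.Eventually.of_forall fun k => ?_)
      exact hHcone _ (hhH (φ k)) _ (inv_nonneg.mpr (hxpos (φ k)).le)
    have hv0 : v = 0 := by
      have : v ∈ L ∩ H := ⟨hvL, hvH⟩
      rwa [hLH, Set.mem_singleton_iff] at this
    rw [mem_sphere_zero_iff_norm, hv0, norm_zero] at hv
    norm_num at hv
end

section
/- Let L and H be closed cones in ℝ^n. If there exists a compact set S ⊆ ℝ^n with L ⊆ H + S and H ⊆ L + S, then L = H. -/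
open Pointwise

lemma cone_sub_aux (n : ℕ) (L H S : Set (EuclideanSpace ℝ (Fin n)))
    (hHc : IsClosed H)
    (hLcone : ∀ x ∈ L, ∀ t : ℝ, 0 ≤ t → t • x ∈ L)
    (hHcone : ∀ x ∈ H, ∀ t : ℝ, 0 ≤ t → t • x ∈ H)
    (hSc : IsCompact S) (hsub : L ⊆ H + S) : L ⊆ H := by
  intro x hx
  obtain ⟨R, hR⟩ := hSc.isBounded.exists_norm_le
  have key : ∀ k : ℕ, ∃ y ∈ H, ‖y - x‖ ≤ R / (k + 1) := by
    intro k
    have hkx : ((k : ℝ) + 1) • x ∈ L := hLcone x hx _ (by positivity)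
    obtain ⟨h, hh, s, hs, hsum⟩ := hsub hkx
    refine ⟨((k : ℝ) + 1)⁻¹ • h, hHcone h hh _ (by positivity), ?_⟩
    have hk0 : ((k : ℝ) + 1) ≠ 0 := by positivity
    have hhe : h = ((k : ℝ) + 1) • x - s := by
      rw [← hsum]; simp only [neg_smul, one_smul]; abel
    have : ((k : ℝ) + 1)⁻¹ • h - x = -(((k : ℝ) + 1)⁻¹ • s) := by
      rw [hhe, smul_sub, smul_smul, inv_mul_cancel₀ hk0, one_smul]
      abel
    rw [this, norm_neg, norm_smul, norm_inv, Real.norm_eq_abs,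
      abs_of_pos (by positivity), div_eq_inv_mul]
    exact mul_le_mul_of_nonneg_left (hR s hs) (by positivity)
  choose y hyH hyd using key
  have hten : Filter.Tendsto y Filter.atTop (nhds x) := by
    rw [← tendsto_sub_nhds_zero_iff]
    apply squeeze_zero_norm hyd
    have := (tendsto_const_div_atTop_nhds_zero_nat R).comp
      (Filter.tendsto_add_atTop_nat 1)
    refine this.congr fun k => ?_
    simp only [Function.comp_apply]
    push_cast
    ring
  exact hHc.mem_of_tendsto hten (Filter.Eventually.of_forall hyH)

/-- If two closed cones `L`, `H` in `ℝⁿ` satisfy `L ⊆ H + S` and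
`H ⊆ L + S` for some compact set `S`, then `L = H`. -/
theorem stmt_1 (n : ℕ) (L H : Set (EuclideanSpace ℝ (Fin n)))
    (hLc : IsClosed L) (hL0 : (0 : EuclideanSpace ℝ (Fin n)) ∈ L)
    (hLcone : ∀ x ∈ L, ∀ t : ℝ, 0 ≤ t → t • x ∈ L)
    (hHc : IsClosed H) (hH0 : (0 : EuclideanSpace ℝ (Fin n)) ∈ H)
    (hHcone : ∀ x ∈ H, ∀ t : ℝ, 0 ≤ t → t • x ∈ H)
    (hS : ∃ S : Set (EuclideanSpace ℝ (Fin n)), IsCompact S ∧ L ⊆ H + S ∧ H ⊆ L + S) :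
    L = H := by
  obtain ⟨S, hSc, h1, h2⟩ := hS
  exact Set.Subset.antisymm
    (cone_sub_aux n L H S hHc hLcone hHcone hSc h1)
    (cone_sub_aux n H L S hLc hHcone hLcone hSc h2)
end

section
/- Let G be a locally compact group and N a normal closed subgroup, with quotient map ϖ : G → G/N. For subsets L̄, H̄ ⊆ G/N set L := ϖ⁻¹(L̄) and H := ϖ⁻¹(H̄). Then there exist g ∈ G and a compact set S ⊆ G with L ⊆ gHS and H ⊆ gLS if and only if there exist ḡ ∈ G/N and a compact set S̄ ⊆ G/N with L̄ ⊆ ḡH̄S̄ and H̄ ⊆ ḡL̄S̄. -/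
open Pointwise

/-- Compact sets in the quotient of a locally compact group lift to compact sets. -/
lemma lift_compact_aux {G : Type*} [Group G] [TopologicalSpace G] [IsTopologicalGroup G]
    [LocallyCompactSpace G] (N : Subgroup G) {Sb : Set (G ⧸ N)} (hSb : IsCompact Sb) :
    ∃ S : Set G, IsCompact S ∧ Sb ⊆ (QuotientGroup.mk : G → G ⧸ N) '' S := by
  choose K hKc hKn using fun x : G => exists_compact_mem_nhds x
  obtain ⟨t, ht⟩ := hSb.elim_finite_subcover
      (fun x : G => (QuotientGroup.mk : G → G ⧸ N) '' interior (K x))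
      (fun x => QuotientGroup.isOpenMap_coe (N := N) _ isOpen_interior)
      (by
        intro y hy
        obtain ⟨x, rfl⟩ := QuotientGroup.mk_surjective y
        exact Set.mem_iUnion.2 ⟨x, ⟨x, mem_interior_iff_mem_nhds.2 (hKn x), rfl⟩⟩)
  refine ⟨⋃ x ∈ t, K x, t.isCompact_biUnion (fun x _ => hKc x), ?_⟩
  intro y hy
  obtain ⟨x, hx, z, hz, rfl⟩ := Set.mem_iUnion₂.1 (ht hy)
  exact ⟨z, Set.mem_biUnion hx (interior_subset hz), rfl⟩

/-- For a locally compact group `G`, a closed normal subgroup `N`, and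
subsets `L̄, H̄` of `G/N` with preimages `L, H` in `G`, the pair `(L,H)` is strongly similar
in `G` iff `(L̄, H̄)` is strongly similar in `G/N`. -/
theorem stmt_2 {G : Type*} [Group G] [TopologicalSpace G] [IsTopologicalGroup G]
    [LocallyCompactSpace G] (N : Subgroup G) [N.Normal] (hN : IsClosed (N : Set G))
    (Lb Hb : Set (G ⧸ N)) :
    (∃ g : G, ∃ S : Set G, IsCompact S ∧
        ((QuotientGroup.mk : G → G ⧸ N) ⁻¹' Lb) ⊆ {g} * ((QuotientGroup.mk : G → G ⧸ N) ⁻¹' Hb) * S ∧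
        ((QuotientGroup.mk : G → G ⧸ N) ⁻¹' Hb) ⊆ {g} * ((QuotientGroup.mk : G → G ⧸ N) ⁻¹' Lb) * S) ↔
    (∃ gb : G ⧸ N, ∃ Sb : Set (G ⧸ N), IsCompact Sb ∧
        Lb ⊆ {gb} * Hb * Sb ∧ Hb ⊆ {gb} * Lb * Sb) := by
  constructor
  · rintro ⟨g, S, hS, h1, h2⟩
    refine ⟨QuotientGroup.mk g, (QuotientGroup.mk : G → G ⧸ N) '' S,
      hS.image (QuotientGroup.continuous_mk), ?_, ?_⟩
    · intro yb hyb
      obtain ⟨y, rfl⟩ := QuotientGroup.mk_surjective yb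
      obtain ⟨gh, ⟨a, ha, h, hh, rfl⟩, s, hs, rfl⟩ := h1 hyb
      obtain rfl : a = g := ha
      exact ⟨QuotientGroup.mk a * QuotientGroup.mk h,
        Set.mul_mem_mul rfl hh, QuotientGroup.mk s, ⟨s, hs, rfl⟩, by
          simp [QuotientGroup.mk_mul]⟩
    · intro yb hyb
      obtain ⟨y, rfl⟩ := QuotientGroup.mk_surjective yb
      obtain ⟨gh, ⟨a, ha, h, hh, rfl⟩, s, hs, rfl⟩ := h2 hyb
      obtain rfl : a = g := ha
      exact ⟨QuotientGroup.mk a * QuotientGroup.mk h,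
        Set.mul_mem_mul rfl hh, QuotientGroup.mk s, ⟨s, hs, rfl⟩, by
          simp [QuotientGroup.mk_mul]⟩
  · rintro ⟨gb, Sb, hSb, h1, h2⟩
    obtain ⟨g, rfl⟩ := QuotientGroup.mk_surjective gb
    obtain ⟨S, hSc, hSlift⟩ := lift_compact_aux N hSb
    have key : ∀ (A B : Set (G ⧸ N)), A ⊆ {(QuotientGroup.mk g : G ⧸ N)} * B * Sb →
        (QuotientGroup.mk : G → G ⧸ N) ⁻¹' A ⊆
          {g} * ((QuotientGroup.mk : G → G ⧸ N) ⁻¹' B) * S := by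
      intro A B hAB x hx
      obtain ⟨gh, ⟨a, ha, hb, hhb, rfl⟩, sb, hsb, hxs⟩ := hAB hx
      obtain rfl : a = QuotientGroup.mk g := ha
      obtain ⟨s, hs, rfl⟩ := hSlift hsb
      refine ⟨g * (g⁻¹ * x * s⁻¹), Set.mul_mem_mul rfl ?_, s, hs, by group⟩
      show QuotientGroup.mk (g⁻¹ * x * s⁻¹) ∈ B
      have : (QuotientGroup.mk (g⁻¹ * x * s⁻¹) : G ⧸ N)
          = (QuotientGroup.mk g)⁻¹ * QuotientGroup.mk x * (QuotientGroup.mk s)⁻¹ := by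
        simp [QuotientGroup.mk_mul]
      rw [this, ← hxs]
      group
      exact hhb
    exact ⟨g, S, hSc, key Lb Hb h1, key Hb Lb h2⟩
end

section
/- Let K be a closed subgroup of O(n), V = ℝ^n, and G = K ⋉ V the semidirect product, realized in GL(n+1,ℝ). For every g ∈ G there exist unique s ∈ G and w ∈ V such that g = sw = ws and the set {s^k : k ∈ ℤ} is relatively compact. Moreover, if g = (k,v) and V₁ is the eigenspace of k with eigenvalue 1 and v = v₁ + v₂ with v₁ ∈ V₁ and v₂ ∈ V₁^⊥, then s = (k, v₂) and w = (e, v₁). -/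
open Matrix

/-- The embedding of the semidirect product `K ⋉ ℝⁿ` into `GL(n+1, ℝ)`:
`(k, v) ↦ [[k, v], [0, 1]]`. -/
noncomputable def embg (n : ℕ) (k : Matrix (Fin n) (Fin n) ℝ) (v : Fin n → ℝ) :
    Matrix (Fin n ⊕ Unit) (Fin n ⊕ Unit) ℝ :=
  Matrix.fromBlocks k (Matrix.of fun i (_ : Unit) => v i) 0 1

variable {n : ℕ}

theorem embg_mul (k1 k2 : Matrix (Fin n) (Fin n) ℝ) (v1 v2 : Fin n → ℝ) :
    embg n k1 v1 * embg n k2 v2 = embg n (k1 * k2) (v1 + k1.mulVec v2) := by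
  unfold embg
  rw [Matrix.fromBlocks_multiply]
  ext i j
  rcases i with i | i <;> rcases j with j | j <;>
    simp [Matrix.mul_apply, Matrix.mulVec, dotProduct, add_comm]

theorem embg_one : embg n 1 0 = 1 := by
  unfold embg
  have : (Matrix.of fun i (_ : Unit) => (0 : Fin n → ℝ) i) = (0 : Matrix (Fin n) Unit ℝ) := rfl
  rw [this, Matrix.fromBlocks_one]

theorem embg_inj {k1 k2 : Matrix (Fin n) (Fin n) ℝ} {v1 v2 : Fin n → ℝ}
    (h : embg n k1 v1 = embg n k2 v2) : k1 = k2 ∧ v1 = v2 := by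
  constructor
  · ext i j; have := congrFun (congrFun h (Sum.inl i)) (Sum.inl j); simpa [embg] using this
  · ext i; have := congrFun (congrFun h (Sum.inl i)) (Sum.inr ()); simpa [embg] using this

theorem inner_eq_dot (n : ℕ) (x y : EuclideanSpace ℝ (Fin n)) :
    (inner ℝ x y : ℝ) = (x : Fin n → ℝ) ⬝ᵥ (y : Fin n → ℝ) := by
  simp [PiLp.inner_apply, dotProduct, mul_comm]

theorem dot_shift {n : ℕ} (A : Matrix (Fin n) (Fin n) ℝ) (x z : Fin n → ℝ) :
    (A.mulVec z) ⬝ᵥ x = (Aᵀ.mulVec x) ⬝ᵥ z := by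
  rw [dotProduct_comm, Matrix.dotProduct_mulVec, ← Matrix.mulVec_transpose]

theorem decomp (n : ℕ) (k : Matrix (Fin n) (Fin n) ℝ) (hO : kᵀ * k = 1) (v : Fin n → ℝ) :
    ∃ v₁ v₂ : Fin n → ℝ, v = v₁ + v₂ ∧ k.mulVec v₁ = v₁ ∧
      (∀ u : Fin n → ℝ, k.mulVec u = u → v₂ ⬝ᵥ u = 0) ∧
      ∃ u : Fin n → ℝ, v₂ = k.mulVec u - u := by
  have hO' : k * kᵀ = 1 := mul_eq_one_comm.mp hO
  have hfix : ∀ x : Fin n → ℝ, k.mulVec x = x ↔ kᵀ.mulVec x = x := by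
    intro x
    constructor
    · intro h
      have := congrArg (kᵀ.mulVec ·) h
      simpa [Matrix.mulVec_mulVec, hO] using this.symm
    · intro h
      have := congrArg (k.mulVec ·) h
      simpa [Matrix.mulVec_mulVec, hO'] using this.symm
  classical
  set E := EuclideanSpace ℝ (Fin n) with hE
  let S : Submodule ℝ E := LinearMap.range ((WithLp.linearEquiv 2 ℝ (Fin n → ℝ)).symm.toLinearMap ∘ₗ (k - 1).mulVecLin)
  have hmemperp : ∀ x : E, x ∈ Sᗮ ↔ k.mulVec x = x := by
    intro x
    rw [Submodule.mem_orthogonal]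
    constructor
    · intro h
      have h0 : ∀ z : Fin n → ℝ, ((k - 1)ᵀ.mulVec x) ⬝ᵥ z = 0 := by
        intro z
        have hy : (WithLp.toLp 2 ((k - 1).mulVecLin z) : E) ∈ S := LinearMap.mem_range_self _ z
        have := h _ hy
        rw [inner_eq_dot] at this
        calc ((k - 1)ᵀ.mulVec x) ⬝ᵥ z = ((k-1).mulVec z) ⬝ᵥ x := (dot_shift _ _ _).symm
          _ = 0 := by simpa [Matrix.mulVecLin_apply, Matrix.sub_mulVec, sub_dotProduct] using this
      have hzero : (k - 1)ᵀ.mulVec x = 0 :=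
        dotProduct_self_eq_zero.mp (h0 _)
      have : kᵀ.mulVec x = x := by
        have := hzero
        rw [Matrix.transpose_sub, Matrix.sub_mulVec] at this
        simpa [sub_eq_zero, Matrix.transpose_one] using this
      exact (hfix x).mpr this
    · intro hx y hy
      obtain ⟨z, hz⟩ := hy
      rw [inner_eq_dot, ← hz]
      have hxT : kᵀ.mulVec x = x := (hfix x).mp hx
      have hzero : (k - 1)ᵀ.mulVec x = 0 := by
        rw [Matrix.transpose_sub, Matrix.sub_mulVec, Matrix.transpose_one,
          Matrix.one_mulVec, hxT, sub_self]
      calc ((k - 1).mulVecLin z : Fin n → ℝ) ⬝ᵥ x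
          = ((k - 1).mulVec z) ⬝ᵥ x := by rw [Matrix.mulVecLin_apply]
        _ = ((k - 1)ᵀ.mulVec x) ⬝ᵥ z := dot_shift _ _ _
        _ = 0 := by rw [hzero, zero_dotProduct]
  let vE : E := WithLp.toLp 2 v
  let v₁ : E := (Submodule.orthogonalProjection Sᗮ vE : E)
  let v₂ : E := vE - v₁
  have hv₂mem : v₂ ∈ Sᗮᗮ := Submodule.sub_starProjection_mem_orthogonal (K := Sᗮ) vE
  have hv₂S : v₂ ∈ S := by rwa [Submodule.orthogonal_orthogonal] at hv₂mem
  refine ⟨v₁, v₂, ?_, ?_, ?_, ?_⟩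
  · show v = (v₁ : Fin n → ℝ) + v₂
    funext i
    show v i = v₁.ofLp i + (v i - v₁.ofLp i); ring
  · exact (hmemperp v₁).mp (Submodule.orthogonalProjection Sᗮ vE).2
  · intro u hu
    have huperp : (WithLp.toLp 2 u : E) ∈ Sᗮ := (hmemperp (WithLp.toLp 2 u)).mpr hu
    have := hv₂mem (WithLp.toLp 2 u) huperp
    rw [inner_eq_dot] at this
    rwa [dotProduct_comm] at this
  · obtain ⟨z, hz⟩ := hv₂S
    refine ⟨z, ?_⟩
    have : ((k - 1).mulVec z) = (v₂ : Fin n → ℝ) := by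
      rw [← Matrix.mulVecLin_apply, ← hz]; rfl
    rw [← this, Matrix.sub_mulVec, Matrix.one_mulVec]

/-- Unit from an `embg` element with invertible `k`. -/
noncomputable def embgUnit (k kinv : Matrix (Fin n) (Fin n) ℝ) (v : Fin n → ℝ)
    (h1 : k * kinv = 1) (h2 : kinv * k = 1) :
    (Matrix (Fin n ⊕ Unit) (Fin n ⊕ Unit) ℝ)ˣ where
  val := embg n k v
  inv := embg n kinv (-(kinv.mulVec v))
  val_inv := by
    rw [embg_mul, h1]
    rw [show v + k.mulVec (-(kinv.mulVec v)) = 0 by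
      simp [Matrix.mulVec_neg, Matrix.mulVec_mulVec, h1]]
    exact embg_one
  inv_val := by
    rw [embg_mul, h2]
    rw [show -(kinv.mulVec v) + kinv.mulVec v = 0 by simp]
    exact embg_one

@[simp] theorem embgUnit_val (k kinv : Matrix (Fin n) (Fin n) ℝ) (v : Fin n → ℝ)
    (h1 : k * kinv = 1) (h2 : kinv * k = 1) :
    (embgUnit k kinv v h1 h2 : Matrix (Fin n ⊕ Unit) (Fin n ⊕ Unit) ℝ) = embg n k v := rfl

theorem embg_pow (k : Matrix (Fin n) (Fin n) ℝ) (v : Fin n → ℝ) (m : ℕ) :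
    (embg n k v) ^ m = embg n (k ^ m) (∑ i ∈ Finset.range m, (k ^ i).mulVec v) := by
  induction m with
  | zero => simpa using embg_one.symm
  | succ m ih =>
      rw [pow_succ, ih, embg_mul, ← pow_succ, Finset.sum_range_succ]

theorem embg_transpose (q : Matrix (Fin n) (Fin n) ℝ) :
    (embg n q 0)ᵀ = Matrix.fromBlocks qᵀ 0 0 1 := by
  unfold embg
  rw [Matrix.fromBlocks_transpose]
  congr 1 <;> ext i j <;> simp

theorem embg_mem_Oset (q : Matrix (Fin n) (Fin n) ℝ) (hq : qᵀ * q = 1) :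
    (embg n q 0)ᵀ * embg n q 0 = 1 := by
  rw [embg_transpose]
  unfold embg
  rw [Matrix.fromBlocks_multiply]
  have h0 : (Matrix.of fun i (_ : Unit) => (0 : Fin n → ℝ) i) = (0 : Matrix (Fin n) Unit ℝ) := rfl
  have h0' : (Matrix.of fun (_ : Fin n) (_ : Unit) => (0:ℝ)) = (0 : Matrix (Fin n) Unit ℝ) := rfl
  simp [h0, h0', hq, ← Matrix.fromBlocks_one]

theorem zpow_embgUnit (k : Matrix (Fin n) (Fin n) ℝ) (h1 : k * kᵀ = 1) (h2 : kᵀ * k = 1)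
    (j : ℤ) : ∃ q : Matrix (Fin n) (Fin n) ℝ, qᵀ * q = 1 ∧
      ((embgUnit k kᵀ 0 h1 h2 ^ j : (Matrix (Fin n ⊕ Unit) (Fin n ⊕ Unit) ℝ)ˣ) :
        Matrix (Fin n ⊕ Unit) (Fin n ⊕ Unit) ℝ) = embg n q 0 := by
  have hinv : ((embgUnit k kᵀ 0 h1 h2)⁻¹ :
      (Matrix (Fin n ⊕ Unit) (Fin n ⊕ Unit) ℝ)ˣ).val = embg n kᵀ 0 := by
    show (embgUnit k kᵀ 0 h1 h2).inv = _
    unfold embgUnit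
    simp
  induction j using Int.induction_on with
  | zero => exact ⟨1, by simp, by simpa using embg_one.symm⟩
  | succ m ih =>
      obtain ⟨q, hq, hval⟩ := ih
      refine ⟨q * k, by rw [Matrix.transpose_mul, mul_assoc, ← mul_assoc qᵀ q k, hq, one_mul, h2], ?_⟩
      rw [_root_.zpow_add_one, Units.val_mul, hval]
      show _ * (embgUnit k kᵀ 0 h1 h2).val = _
      rw [embgUnit_val, embg_mul]
      simp
  | pred m ih =>
      obtain ⟨q, hq, hval⟩ := ih
      refine ⟨q * kᵀ, by rw [Matrix.transpose_mul, Matrix.transpose_transpose, mul_assoc, ← mul_assoc qᵀ q kᵀ, hq, one_mul, h1], ?_⟩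
      rw [_root_.zpow_sub_one, Units.val_mul, hval, hinv, embg_mul]
      simp

theorem isCompact_Oset (n : ℕ) :
    IsCompact {A : Matrix (Fin n ⊕ Unit) (Fin n ⊕ Unit) ℝ | Aᵀ * A = 1} := by
  have hclosed : IsClosed {A : Matrix (Fin n ⊕ Unit) (Fin n ⊕ Unit) ℝ | Aᵀ * A = 1} := by
    have : Continuous fun A : Matrix (Fin n ⊕ Unit) (Fin n ⊕ Unit) ℝ => Aᵀ * A :=
      continuous_id.matrix_transpose.matrix_mul continuous_id
    exact isClosed_eq this continuous_const
  have hsub : {A : Matrix (Fin n ⊕ Unit) (Fin n ⊕ Unit) ℝ | Aᵀ * A = 1} ⊆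
      Set.univ.pi fun _ : Fin n ⊕ Unit =>
        Set.univ.pi fun _ : Fin n ⊕ Unit => Set.Icc (-1:ℝ) 1 := by
    intro A hA i _ j _
    have h1 : (Aᵀ * A) j j = 1 := by rw [hA]; simp
    have h2 : ∑ l, A l j * A l j = 1 := by
      simpa [Matrix.mul_apply, Matrix.transpose_apply] using h1
    have h3 : A i j * A i j ≤ 1 := by
      rw [← h2]
      exact Finset.single_le_sum (f := fun l => A l j * A l j)
        (fun l _ => mul_self_nonneg _) (Finset.mem_univ i)
    constructor <;> nlinarith
  exact (isCompact_univ_pi fun _ => isCompact_univ_pi fun _ => isCompact_Icc).of_isClosed_subset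
    hclosed hsub

theorem elliptic_range (k : Matrix (Fin n) (Fin n) ℝ) (h1 : k * kᵀ = 1) (h2 : kᵀ * k = 1)
    (c : (Matrix (Fin n ⊕ Unit) (Fin n ⊕ Unit) ℝ)ˣ) :
    IsCompact (closure (Set.range fun j : ℤ =>
      (((c * embgUnit k kᵀ 0 h1 h2 * c⁻¹) ^ j :
        (Matrix (Fin n ⊕ Unit) (Fin n ⊕ Unit) ℝ)ˣ) :
        Matrix (Fin n ⊕ Unit) (Fin n ⊕ Unit) ℝ))) := by
  have hcont : Continuous fun A : Matrix (Fin n ⊕ Unit) (Fin n ⊕ Unit) ℝ =>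
      (c : Matrix (Fin n ⊕ Unit) (Fin n ⊕ Unit) ℝ) * A * ((c⁻¹ : _ˣ) : Matrix (Fin n ⊕ Unit) (Fin n ⊕ Unit) ℝ) :=
    (continuous_const.matrix_mul continuous_id).matrix_mul continuous_const
  have himg := (isCompact_Oset n).image hcont
  have hsub : (Set.range fun j : ℤ =>
      (((c * embgUnit k kᵀ 0 h1 h2 * c⁻¹) ^ j : (Matrix (Fin n ⊕ Unit) (Fin n ⊕ Unit) ℝ)ˣ) :
        Matrix (Fin n ⊕ Unit) (Fin n ⊕ Unit) ℝ)) ⊆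
      (fun A => (c : Matrix (Fin n ⊕ Unit) (Fin n ⊕ Unit) ℝ) * A *
        ((c⁻¹ : _ˣ) : Matrix (Fin n ⊕ Unit) (Fin n ⊕ Unit) ℝ)) '' {A | Aᵀ * A = 1} := by
    rintro _ ⟨j, rfl⟩
    obtain ⟨q, hq, hval⟩ := zpow_embgUnit k h1 h2 j
    refine ⟨embg n q 0, embg_mem_Oset q hq, ?_⟩
    show _ = ((c * embgUnit k kᵀ 0 h1 h2 * c⁻¹) ^ j :
      (Matrix (Fin n ⊕ Unit) (Fin n ⊕ Unit) ℝ)ˣ).val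
    rw [conj_zpow, Units.val_mul, Units.val_mul, hval]
  exact himg.of_isClosed_subset isClosed_closure (closure_minimal hsub himg.isClosed)

/-- The property that `sw = (s, w)` is a Jordan decomposition `g = s·w = w·s` of
`g = (k,v) ∈ G = K ⋉ ℝⁿ` with `s ∈ G` elliptic (i.e. `{sᵏ : k ∈ ℤ}` relatively compact)
and `w ∈ V = ℝⁿ`. -/
def EllipticJordan (n : ℕ) (K : Set (Matrix (Fin n) (Fin n) ℝ))
    (k : Matrix (Fin n) (Fin n) ℝ) (v : Fin n → ℝ)
    (sw : (Matrix (Fin n ⊕ Unit) (Fin n ⊕ Unit) ℝ)ˣ ×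
          (Matrix (Fin n ⊕ Unit) (Fin n ⊕ Unit) ℝ)ˣ) : Prop :=
  (∃ k' ∈ K, ∃ v' : Fin n → ℝ,
      (sw.1 : Matrix (Fin n ⊕ Unit) (Fin n ⊕ Unit) ℝ) = embg n k' v') ∧
  (∃ w : Fin n → ℝ,
      (sw.2 : Matrix (Fin n ⊕ Unit) (Fin n ⊕ Unit) ℝ) = embg n 1 w) ∧
  embg n k v = ↑(sw.1 * sw.2) ∧ embg n k v = ↑(sw.2 * sw.1) ∧
  IsCompact (closure (Set.range fun j : ℤ =>
    ((sw.1 ^ j : (Matrix (Fin n ⊕ Unit) (Fin n ⊕ Unit) ℝ)ˣ) :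
      Matrix (Fin n ⊕ Unit) (Fin n ⊕ Unit) ℝ)))

theorem pow_fix (k : Matrix (Fin n) (Fin n) ℝ) (u : Fin n → ℝ) (h : k.mulVec u = u) (i : ℕ) :
    (k ^ i).mulVec u = u := by
  induction i with
  | zero => simp
  | succ i ih => rw [pow_succ, ← Matrix.mulVec_mulVec, h, ih]

theorem key (K : Set (Matrix (Fin n) (Fin n) ℝ))
    (hKO : ∀ A ∈ K, Aᵀ * A = 1)
    (k : Matrix (Fin n) (Fin n) ℝ) (hk : k ∈ K) (v v₁ v₂ : Fin n → ℝ)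
    (hsum : v = v₁ + v₂) (h1 : k.mulVec v₁ = v₁)
    (h2 : ∀ u : Fin n → ℝ, k.mulVec u = u → v₂ ⬝ᵥ u = 0)
    (sw : (Matrix (Fin n ⊕ Unit) (Fin n ⊕ Unit) ℝ)ˣ ×
          (Matrix (Fin n ⊕ Unit) (Fin n ⊕ Unit) ℝ)ˣ)
    (hEJ : EllipticJordan n K k v sw) :
    (sw.1 : Matrix (Fin n ⊕ Unit) (Fin n ⊕ Unit) ℝ) = embg n k v₂ ∧
    (sw.2 : Matrix (Fin n ⊕ Unit) (Fin n ⊕ Unit) ℝ) = embg n 1 v₁ := by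
  obtain ⟨⟨k', hk', v', hs⟩, ⟨w, hw⟩, hg1, hg2, hcpt⟩ := hEJ
  rw [Units.val_mul, hs, hw, embg_mul] at hg1 hg2
  simp only [mul_one, one_mul, Matrix.one_mulVec] at hg1 hg2
  obtain ⟨hkk, hv1⟩ := embg_inj hg1
  obtain ⟨-, hv2⟩ := embg_inj hg2
  subst hkk
  have hO : kᵀ * k = 1 := hKO k hk
  have hO' : k * kᵀ = 1 := mul_eq_one_comm.mp hO
  have hfixT : ∀ x : Fin n → ℝ, k.mulVec x = x → kᵀ.mulVec x = x := by
    intro x h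
    have := congrArg (kᵀ.mulVec ·) h
    simpa [Matrix.mulVec_mulVec, hO] using this.symm
  have hfixw : k.mulVec w = w := by
    have h' : v' + k.mulVec w = v' + w := by
      rw [← hv1, hv2, add_comm]
    exact add_left_cancel h'
  -- perpendicularity of v' to the fixed space, from ellipticity
  have hperp' : ∀ u : Fin n → ℝ, k.mulVec u = u → v' ⬝ᵥ u = 0 := by
    intro u hu
    set c : ℝ := v' ⬝ᵥ u with hc
    by_contra hcne
    let f : Matrix (Fin n ⊕ Unit) (Fin n ⊕ Unit) ℝ → ℝ :=
      fun A => ∑ i, A (Sum.inl i) (Sum.inr ()) * u i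
    have hfc : Continuous f :=
      continuous_finset_sum _ fun i _ =>
        (continuous_id.matrix_elem (Sum.inl i) (Sum.inr ())).mul
          continuous_const
    have hfval : ∀ j : ℕ, f ((sw.1 ^ (j:ℤ) :
        (Matrix (Fin n ⊕ Unit) (Fin n ⊕ Unit) ℝ)ˣ) :
        Matrix (Fin n ⊕ Unit) (Fin n ⊕ Unit) ℝ) = j * c := by
      intro j
      rw [zpow_natCast, Units.val_pow_eq_pow_val, hs, embg_pow]
      have hentry : ∀ i : Fin n,
          (embg n (k ^ j) (∑ i ∈ Finset.range j, (k ^ i).mulVec v')) (Sum.inl i) (Sum.inr ())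
            = (∑ l ∈ Finset.range j, (k ^ l).mulVec v') i := fun i => by simp [embg]
      calc f (embg n (k ^ j) (∑ i ∈ Finset.range j, (k ^ i).mulVec v'))
          = (∑ l ∈ Finset.range j, (k ^ l).mulVec v') ⬝ᵥ u := by
            simp only [f, hentry]; rfl
        _ = ∑ l ∈ Finset.range j, ((k ^ l).mulVec v') ⬝ᵥ u := by
            simp only [dotProduct, Finset.sum_apply, Finset.sum_mul]
            exact Finset.sum_comm
        _ = ∑ l ∈ Finset.range j, c := by
            refine Finset.sum_congr rfl fun l _ => ?_
            rw [dot_shift, Matrix.transpose_pow, pow_fix kᵀ u (hfixT u hu) l,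
              dotProduct_comm]
        _ = j * c := by simp [mul_comm]
    have hmem : ∀ j : ℕ, (j : ℝ) * c ∈ f '' closure (Set.range fun j : ℤ =>
        ((sw.1 ^ j : (Matrix (Fin n ⊕ Unit) (Fin n ⊕ Unit) ℝ)ˣ) :
          Matrix (Fin n ⊕ Unit) (Fin n ⊕ Unit) ℝ)) := by
      intro j
      exact ⟨_, subset_closure ⟨(j:ℤ), rfl⟩, hfval j⟩
    obtain ⟨M, hM⟩ := (hcpt.image hfc).bddAbove
    obtain ⟨m, hm⟩ := (hcpt.image hfc).bddBelow
    have hbound : ∀ j : ℕ, (j:ℝ) * |c| ≤ max M (-m) := by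
      intro j
      have hub : (j:ℝ) * c ≤ M := hM (hmem j)
      have hlb : m ≤ (j:ℝ) * c := hm (hmem j)
      rcases le_or_gt 0 c with h | h
      · rw [abs_of_nonneg h]; exact hub.trans (le_max_left _ _)
      · rw [abs_of_neg h]
        have : -((j:ℝ) * c) ≤ -m := by linarith
        calc (j:ℝ) * -c = -((j:ℝ)*c) := by ring
          _ ≤ -m := this
          _ ≤ max M (-m) := le_max_right _ _
    obtain ⟨j, hj⟩ := exists_nat_gt (max M (-m) / |c|)
    have habs : 0 < |c| := abs_pos.mpr hcne
    have := hbound j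
    rw [div_lt_iff₀ habs] at hj
    linarith
  -- conclude
  have hfixd : k.mulVec (v₁ - w) = v₁ - w := by
    rw [Matrix.mulVec_sub, h1, hfixw]
  have hd : v' - v₂ = v₁ - w := by
    rw [sub_eq_sub_iff_add_eq_add, add_comm, ← hv2, hsum]
  have hzero : v₁ - w = 0 := by
    have hdot : (v₁ - w) ⬝ᵥ (v₁ - w) = 0 := by
      nth_rewrite 1 [← hd]
      rw [sub_dotProduct, hperp' _ hfixd, h2 _ hfixd, sub_self]
    exact dotProduct_self_eq_zero.mp hdot
  have hw1 : w = v₁ := (sub_eq_zero.mp hzero).symm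
  have hv'2 : v' = v₂ := sub_eq_zero.mp (hd.trans hzero)
  exact ⟨by rw [hs, hv'2], by rw [hw, hw1]⟩

/-- In `G = K ⋉ ℝⁿ ⊆ GL(n+1,ℝ)` with `K` a closed subgroup of `O(n)`,
every `g = (k,v) ∈ G` has a unique decomposition `g = s·w = w·s` with `s ∈ G` elliptic and
`w ∈ V`.  Moreover, if `v = v₁ + v₂` with `v₁` in the `1`-eigenspace `V₁` of `k` and
`v₂ ⊥ V₁`, then `s = (k, v₂)` and `w = (e, v₁)`. -/
theorem stmt_5 (n : ℕ) (K : Set (Matrix (Fin n) (Fin n) ℝ))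
    (hKO : ∀ A ∈ K, Aᵀ * A = 1) (hK1 : (1 : Matrix (Fin n) (Fin n) ℝ) ∈ K)
    (hKmul : ∀ A ∈ K, ∀ B ∈ K, A * B ∈ K) (hKinv : ∀ A ∈ K, Aᵀ ∈ K)
    (hKcl : IsClosed K)
    (k : Matrix (Fin n) (Fin n) ℝ) (hk : k ∈ K) (v : Fin n → ℝ) :
    (∃! sw : (Matrix (Fin n ⊕ Unit) (Fin n ⊕ Unit) ℝ)ˣ ×
             (Matrix (Fin n ⊕ Unit) (Fin n ⊕ Unit) ℝ)ˣ,
        EllipticJordan n K k v sw) ∧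
    (∀ v₁ v₂ : Fin n → ℝ, v = v₁ + v₂ → k.mulVec v₁ = v₁ →
      (∀ u : Fin n → ℝ, k.mulVec u = u → v₂ ⬝ᵥ u = 0) →
      ∀ sw : (Matrix (Fin n ⊕ Unit) (Fin n ⊕ Unit) ℝ)ˣ ×
             (Matrix (Fin n ⊕ Unit) (Fin n ⊕ Unit) ℝ)ˣ,
        EllipticJordan n K k v sw →
          (sw.1 : Matrix (Fin n ⊕ Unit) (Fin n ⊕ Unit) ℝ) = embg n k v₂ ∧
          (sw.2 : Matrix (Fin n ⊕ Unit) (Fin n ⊕ Unit) ℝ) = embg n 1 v₁) := by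
  have hO : kᵀ * k = 1 := hKO k hk
  have hO' : k * kᵀ = 1 := mul_eq_one_comm.mp hO
  obtain ⟨v₁, v₂, hsum, h1, h2, u, hu⟩ := decomp n k hO v
  let cu := embgUnit (1 : Matrix (Fin n) (Fin n) ℝ) 1 (-u) (one_mul 1) (one_mul 1)
  let u0 := embgUnit k kᵀ 0 hO' hO
  let s := cu * u0 * cu⁻¹
  let wU := embgUnit (1 : Matrix (Fin n) (Fin n) ℝ) 1 v₁ (one_mul 1) (one_mul 1)
  have hcuinv : ((cu⁻¹ : (Matrix (Fin n ⊕ Unit) (Fin n ⊕ Unit) ℝ)ˣ) :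
      Matrix (Fin n ⊕ Unit) (Fin n ⊕ Unit) ℝ) = embg n 1 u := by
    show (embgUnit (1 : Matrix (Fin n) (Fin n) ℝ) 1 (-u) (one_mul 1) (one_mul 1)).inv = _
    show embg n 1 (-((1 : Matrix (Fin n) (Fin n) ℝ).mulVec (-u))) = _
    rw [Matrix.one_mulVec, neg_neg]
  have hsval : ((s : (Matrix (Fin n ⊕ Unit) (Fin n ⊕ Unit) ℝ)ˣ) :
      Matrix (Fin n ⊕ Unit) (Fin n ⊕ Unit) ℝ) = embg n k v₂ := by
    show (cu : Matrix (Fin n ⊕ Unit) (Fin n ⊕ Unit) ℝ) * u0 * (cu⁻¹ : _ˣ) = _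
    rw [embgUnit_val, embgUnit_val, hcuinv, embg_mul, embg_mul]
    rw [one_mul, mul_one, Matrix.one_mulVec]
    congr 1
    rw [hu]
    abel
  have hwval : ((wU : (Matrix (Fin n ⊕ Unit) (Fin n ⊕ Unit) ℝ)ˣ) :
      Matrix (Fin n ⊕ Unit) (Fin n ⊕ Unit) ℝ) = embg n 1 v₁ := rfl
  have hEJ : EllipticJordan n K k v (s, wU) := by
    refine ⟨⟨k, hk, v₂, hsval⟩, ⟨v₁, hwval⟩, ?_, ?_, ?_⟩
    · show embg n k v = ((s * wU : (Matrix (Fin n ⊕ Unit) (Fin n ⊕ Unit) ℝ)ˣ) :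
        Matrix (Fin n ⊕ Unit) (Fin n ⊕ Unit) ℝ)
      rw [Units.val_mul, hsval, hwval, embg_mul, mul_one, h1, hsum, add_comm]
    · show embg n k v = ((wU * s : (Matrix (Fin n ⊕ Unit) (Fin n ⊕ Unit) ℝ)ˣ) :
        Matrix (Fin n ⊕ Unit) (Fin n ⊕ Unit) ℝ)
      rw [Units.val_mul, hsval, hwval, embg_mul, one_mul, Matrix.one_mulVec, hsum]
    · exact elliptic_range k hO' hO cu
  constructor
  · refine ⟨(s, wU), hEJ, ?_⟩
    intro y hy
    obtain ⟨e1, e2⟩ := key K hKO k hk v v₁ v₂ hsum h1 h2 y hy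
    have hy1 : y.1 = s := Units.ext (e1.trans hsval.symm)
    have hy2 : y.2 = wU := Units.ext (e2.trans hwval.symm)
    exact Prod.ext hy1 hy2
  · intro v₁' v₂' hsum' h1' h2' sw hsw
    exact key K hKO k hk v v₁' v₂' hsum' h1' h2' sw hsw
end

section
/- Let K be a compact group, (τ,V) a finite-dimensional real representation of K, and G = K ⋉_τ V. If Γ is an abelian closed subgroup of G, then there exists a linear subspace W ⊆ V, a point g ∈ G, and a compact set S ⊆ G with Γ ⊆ gWS and W ⊆ gΓS. -/
/-- Multiplication in the semidirect product `G = K ⋉_τ V`: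
`(k₁,X₁)(k₂,X₂) = (k₁k₂, X₁ + τ(k₁)X₂)`. -/
def sdMul {K V : Type*} [Group K] [AddCommGroup V] [Module ℝ V]
    (τ : Representation ℝ K V) (a b : K × V) : K × V :=
  (a.1 * b.1, a.2 + τ a.1 b.2)

/-- Inversion in the semidirect product `G = K ⋉_τ V`. -/
def sdInv {K V : Type*} [Group K] [AddCommGroup V] [Module ℝ V]
    (τ : Representation ℝ K V) (a : K × V) : K × V :=
  (a.1⁻¹, -(τ a.1⁻¹ a.2))

section AuxLemmas

variable {V : Type*} [NormedAddCommGroup V] [NormedSpace ℝ V]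

/-- Averaging lemma: if `v` is fixed by commuting power-bounded operators and can be
approximated by sums of "coboundaries" with uniformly bounded `u`'s, then `v = 0`. -/
lemma key_zero : ∀ (r : ℕ) (T : Fin r → Module.End ℝ V) (M C : ℝ), 1 ≤ M → 0 ≤ C →
    (∀ i j, T i * T j = T j * T i) →
    (∀ j (n : ℕ) (u : V), ‖(T j ^ n) u‖ ≤ M * ‖u‖) →
    ∀ v : V, (∀ j, T j v = v) →
    (∀ ε > (0:ℝ), ∃ u : Fin r → V, (∀ j, ‖u j‖ ≤ C) ∧
      ‖v - ∑ j, (T j (u j) - u j)‖ ≤ ε) →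
    v = 0 := by
  intro r
  induction r with
  | zero =>
      intro T M C hM hC hcomm hpow v hfix happ
      have h0 : ‖v‖ ≤ 0 := by
        refine le_of_forall_pos_le_add ?_
        intro ε hε
        obtain ⟨u, -, hu⟩ := happ ε hε
        simpa using hu
      simpa using norm_le_zero_iff.mp h0
  | succ r ih =>
      intro T M C hM hC hcomm hpow v hfix happ
      have hM0 : (0:ℝ) < M := lt_of_lt_of_le one_pos hM
      refine ih (fun j => T j.succ) M (M * C) hM (by positivity)
        (fun i j => hcomm i.succ j.succ) (fun j n u => hpow j.succ n u) v
        (fun j => hfix j.succ) ?_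
      intro ε hε
      obtain ⟨u, hub, hu⟩ := happ (ε / (2 * M)) (by positivity)
      -- choose N
      obtain ⟨N, hN⟩ := exists_nat_gt (max 1 ((M + 1) * C * 2 / ε))
      have hN1 : (1:ℝ) ≤ N := le_trans (le_max_left _ _) hN.le
      have hNpos : (0:ℝ) < N := lt_of_lt_of_le one_pos hN1
      have hNne : (N:ℝ) ≠ 0 := ne_of_gt hNpos
      set A : Module.End ℝ V := (N:ℝ)⁻¹ • ∑ n ∈ Finset.range N, T 0 ^ n with hA
      have hAapp : ∀ w : V, A w = (N:ℝ)⁻¹ • ∑ n ∈ Finset.range N, (T 0 ^ n) w := by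
        intro w
        simp [hA, LinearMap.smul_apply, LinearMap.sum_apply]
      have hAnorm : ∀ w : V, ‖A w‖ ≤ M * ‖w‖ := by
        intro w
        rw [hAapp, norm_smul]
        calc ‖(N:ℝ)⁻¹‖ * ‖∑ n ∈ Finset.range N, (T 0 ^ n) w‖
            ≤ (N:ℝ)⁻¹ * ∑ n ∈ Finset.range N, ‖(T 0 ^ n) w‖ := by
              rw [Real.norm_eq_abs, abs_of_nonneg (by positivity)]
              gcongr
              exact norm_sum_le _ _
          _ ≤ (N:ℝ)⁻¹ * ∑ n ∈ Finset.range N, M * ‖w‖ := by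
              gcongr with n hn
              exact hpow 0 n w
          _ = M * ‖w‖ := by
              rw [Finset.sum_const, Finset.card_range, nsmul_eq_mul]
              field_simp
      have hAv : A v = v := by
        have hTn : ∀ n : ℕ, (T 0 ^ n) v = v := by
          intro n
          induction n with
          | zero => simp
          | succ n ihn => rw [pow_succ, Module.End.mul_apply, hfix 0, ihn]
        rw [hAapp]
        simp only [hTn]
        rw [Finset.sum_const, Finset.card_range, ← Nat.cast_smul_eq_nsmul ℝ, smul_smul]
        rw [inv_mul_cancel₀ hNne, one_smul]
      have hAtel : ‖A (T 0 (u 0) - u 0)‖ ≤ ε / 2 := by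
        have htel : A (T 0 (u 0) - u 0)
            = (N:ℝ)⁻¹ • ((T 0 ^ N) (u 0) - u 0) := by
          rw [hAapp]
          congr 1
          have : ∀ n : ℕ, (T 0 ^ n) (T 0 (u 0) - u 0)
              = (T 0 ^ (n+1)) (u 0) - (T 0 ^ n) (u 0) := by
            intro n
            rw [map_sub, pow_succ, Module.End.mul_apply]
          simp only [this]
          rw [Finset.sum_range_sub (fun n => (T 0 ^ n) (u 0))]
          simp
        rw [htel, norm_smul, Real.norm_eq_abs, abs_of_nonneg (by positivity)]
        have h1 : ‖(T 0 ^ N) (u 0) - u 0‖ ≤ (M + 1) * C := by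
          calc ‖(T 0 ^ N) (u 0) - u 0‖ ≤ ‖(T 0 ^ N) (u 0)‖ + ‖u 0‖ := norm_sub_le _ _
            _ ≤ M * ‖u 0‖ + ‖u 0‖ := by gcongr; exact hpow 0 N (u 0)
            _ = (M + 1) * ‖u 0‖ := by ring
            _ ≤ (M + 1) * C := by gcongr; exact hub 0
        calc (N:ℝ)⁻¹ * ‖(T 0 ^ N) (u 0) - u 0‖ ≤ (N:ℝ)⁻¹ * ((M + 1) * C) := by gcongr
          _ ≤ ε / 2 := by
            rw [inv_mul_le_iff₀ hNpos]
            have h2 : (M + 1) * C * 2 / ε < N := lt_of_le_of_lt (le_max_right _ _) hN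
            rw [div_lt_iff₀ hε] at h2
            nlinarith
      have hAcomm : ∀ (j : Fin r) (w : V), A (T j.succ w) = T j.succ (A w) := by
        intro j w
        rw [hAapp, hAapp, map_smul, map_sum]
        congr 1
        refine Finset.sum_congr rfl fun n _ => ?_
        have hc : T 0 ^ n * T j.succ = T j.succ * T 0 ^ n :=
          ((Commute.pow_left (hcomm 0 j.succ) n)).eq
        calc (T 0 ^ n) (T j.succ w) = (T 0 ^ n * T j.succ) w := rfl
          _ = (T j.succ * T 0 ^ n) w := by rw [hc]
          _ = T j.succ ((T 0 ^ n) w) := rfl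
      refine ⟨fun j => A (u j.succ), fun j => ?_, ?_⟩
      · calc ‖A (u j.succ)‖ ≤ M * ‖u j.succ‖ := hAnorm _
          _ ≤ M * C := by gcongr; exact hub j.succ
      · have hkey : v - ∑ j : Fin r, (T j.succ (A (u j.succ)) - A (u j.succ))
            = A (v - ∑ j : Fin (r+1), (T j (u j) - u j)) + A (T 0 (u 0) - u 0) := by
          rw [map_sub, hAv, map_sum]
          have hterm : ∀ j : Fin r, A (T j.succ (u j.succ) - u j.succ)
              = T j.succ (A (u j.succ)) - A (u j.succ) := by
            intro j
            rw [map_sub, hAcomm]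
          rw [Fin.sum_univ_succ]
          simp only [hterm, map_add]
          abel
        rw [hkey]
        calc ‖A (v - ∑ j : Fin (r+1), (T j (u j) - u j)) + A (T 0 (u 0) - u 0)‖
            ≤ ‖A (v - ∑ j : Fin (r+1), (T j (u j) - u j))‖ + ‖A (T 0 (u 0) - u 0)‖ :=
              norm_add_le _ _
          _ ≤ M * (ε / (2 * M)) + ε / 2 := by
              gcongr
              calc ‖A (v - ∑ j : Fin (r+1), (T j (u j) - u j))‖
                  ≤ M * ‖v - ∑ j : Fin (r+1), (T j (u j) - u j)‖ := hAnorm _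
                _ ≤ M * (ε / (2 * M)) := by gcongr
          _ = ε := by field_simp; ring

variable {V : Type*} [NormedAddCommGroup V] [NormedSpace ℝ V]

/-- Elements of the span of a scaling-invariant set are finite sums of elements of the set. -/
lemma span_eq_sums (D : Set V) (hD : ∀ (c : ℝ), ∀ x ∈ D, c • x ∈ D) {v : V}
    (hv : v ∈ Submodule.span ℝ D) :
    ∃ (r : ℕ) (d : Fin r → V), (∀ j, d j ∈ D) ∧ v = ∑ j, d j := by
  induction hv using Submodule.span_induction with
  | mem x hx => exact ⟨1, fun _ => x, fun _ => hx, by simp⟩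
  | zero => exact ⟨0, Fin.elim0, fun j => j.elim0, by simp⟩
  | add x y hx hy ihx ihy =>
      obtain ⟨r₁, d₁, hd₁, hs₁⟩ := ihx
      obtain ⟨r₂, d₂, hd₂, hs₂⟩ := ihy
      refine ⟨r₁ + r₂, Fin.append d₁ d₂, ?_, ?_⟩
      · intro j
        refine Fin.addCases (fun i => ?_) (fun i => ?_) j
        · rw [Fin.append_left]; exact hd₁ i
        · rw [Fin.append_right]; exact hd₂ i
      · rw [Fin.sum_univ_add]
        simp only [Fin.append_left, Fin.append_right]
        rw [hs₁, hs₂]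
  | smul c x hx ihx =>
      obtain ⟨r, d, hd, hs⟩ := ihx
      exact ⟨r, fun j => c • d j, fun j => hD c _ (hd j), by rw [hs, Finset.smul_sum]⟩

/-- A (possibly infinite) infimum of submodules in a f.d. space is a finite sub-infimum. -/
lemma finset_iInf [FiniteDimensional ℝ V] {ι : Type*} (f : ι → Submodule ℝ V) :
    ∃ s : Finset ι, (⨅ i ∈ s, f i) = ⨅ i, f i := by
  classical
  set S : Set ℕ := {m | ∃ s : Finset ι, m = Module.finrank ℝ ↥(⨅ i ∈ s, f i)} with hS
  have hSne : S.Nonempty := ⟨_, ⟨∅, rfl⟩⟩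
  obtain ⟨s, hs⟩ : ∃ s : Finset ι, sInf S = Module.finrank ℝ ↥(⨅ i ∈ s, f i) :=
    Nat.sInf_mem hSne
  have hkey : ∀ j : ι, (⨅ i ∈ s, f i) ≤ f j := by
    intro j
    by_contra hj
    have hlt : (⨅ i ∈ insert j s, f i) < ⨅ i ∈ s, f i := by
      rw [Finset.iInf_insert]
      refine lt_of_le_of_ne inf_le_right ?_
      intro heq
      exact hj (heq ▸ inf_le_left)
    have hrank : Module.finrank ℝ ↥(⨅ i ∈ insert j s, f i)
        < Module.finrank ℝ ↥(⨅ i ∈ s, f i) :=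
      Submodule.finrank_lt_finrank_of_lt hlt
    have hmem : Module.finrank ℝ ↥(⨅ i ∈ insert j s, f i) ∈ S := ⟨insert j s, rfl⟩
    have := Nat.sInf_le hmem
    omega
  refine ⟨s, le_antisymm (le_iInf hkey) (le_iInf₂ fun i _ => iInf_le f i)⟩

variable {V : Type*} [NormedAddCommGroup V] [NormedSpace ℝ V]

/-- A continuous, absolutely homogeneous, nonnegative function positive off `0` on a f.d.
subspace dominates a multiple of the norm there. -/
lemma min_on_subspace [FiniteDimensional ℝ V] (V₁ : Submodule ℝ V) (g : V → ℝ)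
    (hgc : Continuous g) (hg0 : ∀ v, 0 ≤ g v) (hgh : ∀ (c : ℝ) (v : V), g (c • v) = |c| * g v)
    (hpos : ∀ v ∈ V₁, g v = 0 → v = 0) :
    ∃ ε > (0:ℝ), ∀ v ∈ V₁, ε * ‖v‖ ≤ g v := by
  by_cases hbot : ∀ v ∈ V₁, v = (0:V)
  · refine ⟨1, one_pos, fun v hv => ?_⟩
    rw [hbot v hv]
    simpa using hg0 0
  · push_neg at hbot
    obtain ⟨v₀, hv₀, hv₀ne⟩ := hbot
    set s : Set V := (V₁ : Set V) ∩ Metric.sphere 0 1 with hsdef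
    have hscomp : IsCompact s :=
      (isCompact_sphere (0:V) 1).inter_left (Submodule.closed_of_finiteDimensional V₁)
    have hsne : s.Nonempty := by
      refine ⟨‖v₀‖⁻¹ • v₀, ⟨V₁.smul_mem _ hv₀, ?_⟩⟩
      simp [norm_smul, inv_mul_cancel₀ (norm_ne_zero_iff.mpr hv₀ne)]
    obtain ⟨w, hws, hwmin⟩ := hscomp.exists_isMinOn hsne hgc.continuousOn
    have hwpos : 0 < g w := by
      rcases lt_or_eq_of_le (hg0 w) with h | h
      · exact h
      · exfalso
        have hw0 : w = 0 := hpos w hws.1 h.symm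
        have hw1 : w ∈ Metric.sphere (0:V) 1 := hws.2
        rw [hw0] at hw1
        simp at hw1
    refine ⟨g w, hwpos, fun v hv => ?_⟩
    rcases eq_or_ne v 0 with rfl | hvne
    · simpa using hg0 0
    · have hnv : (0:ℝ) < ‖v‖ := norm_pos_iff.mpr hvne
      have hmem : ‖v‖⁻¹ • v ∈ s := by
        refine ⟨V₁.smul_mem _ hv, ?_⟩
        simp [norm_smul, inv_mul_cancel₀ hnv.ne']
      have hle : g w ≤ g (‖v‖⁻¹ • v) := hwmin hmem
      have hgv : g (‖v‖⁻¹ • v) = ‖v‖⁻¹ * g v := by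
        rw [hgh, abs_of_pos (inv_pos.mpr hnv)]
      rw [hgv] at hle
      calc g w * ‖v‖ ≤ (‖v‖⁻¹ * g v) * ‖v‖ := by gcongr
        _ = g v := by field_simp

variable {V : Type*} [NormedAddCommGroup V] [NormedSpace ℝ V]

/-- Every point of the real span of an additive subgroup of a f.d. space lies at bounded
distance from the subgroup. -/
lemma lattice_approx [FiniteDimensional ℝ V] (A : AddSubgroup V) :
    ∃ C ≥ (0:ℝ), ∀ w ∈ Submodule.span ℝ (A : Set V), ∃ a ∈ A, ‖w - a‖ ≤ C := by
  classical
  obtain ⟨b, hbA, hbspan, hbli⟩ := exists_linearIndependent ℝ (A : Set V)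
  have hbfin : b.Finite := hbli.setFinite
  set t : Finset V := hbfin.toFinset with ht
  have htA : ∀ x ∈ t, x ∈ A := by
    intro x hx
    exact hbA (by simpa [ht] using hx)
  refine ⟨∑ x ∈ t, ‖x‖, Finset.sum_nonneg (fun x _ => norm_nonneg x), fun w hw => ?_⟩
  have hw' : w ∈ Submodule.span ℝ (t : Set V) := by
    rw [show ((t : Finset V) : Set V) = b by simp [ht], hbspan]
    exact hw
  obtain ⟨f, -, hf⟩ := Submodule.mem_span_finset.mp hw'
  refine ⟨∑ x ∈ t, ⌊f x⌋ • x, AddSubgroup.sum_mem A (fun x hx => AddSubgroup.zsmul_mem A (htA x hx) _), ?_⟩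
  have hdiff : w - ∑ x ∈ t, ⌊f x⌋ • x = ∑ x ∈ t, Int.fract (f x) • x := by
    rw [← hf, ← Finset.sum_sub_distrib]
    refine Finset.sum_congr rfl fun x _ => ?_
    rw [← Int.cast_smul_eq_zsmul ℝ, ← sub_smul, Int.self_sub_floor]
  rw [hdiff]
  calc ‖∑ x ∈ t, Int.fract (f x) • x‖ ≤ ∑ x ∈ t, ‖Int.fract (f x) • x‖ := norm_sum_le _ _
    _ ≤ ∑ x ∈ t, ‖x‖ := by
        refine Finset.sum_le_sum fun x _ => ?_
        rw [norm_smul, Real.norm_eq_abs, abs_of_nonneg (Int.fract_nonneg _)]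
        nlinarith [Int.fract_lt_one (f x), norm_nonneg x, Int.fract_nonneg (f x)]

end AuxLemmas

/-- Let `K` be a compact group, `(τ,V)` a finite-dimensional real
representation, `G = K ⋉_τ V`.  If `Γ` is an abelian closed subgroup of `G`, then there is a
linear subspace `W ⊆ V`, a point `g ∈ G`, and a compact `S ⊆ G` with `Γ ⊆ gWS` and
`W ⊆ gΓS`. -/
theorem stmt_6 {K V : Type*} [Group K] [TopologicalSpace K] [IsTopologicalGroup K]
    [CompactSpace K] [NormedAddCommGroup V] [NormedSpace ℝ V] [FiniteDimensional ℝ V]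
    (τ : Representation ℝ K V) (hτ : Continuous fun p : K × V => τ p.1 p.2)
    (Γ : Set (K × V)) (hΓcl : IsClosed Γ) (hΓ1 : ((1 : K), (0 : V)) ∈ Γ)
    (hΓmul : ∀ a ∈ Γ, ∀ b ∈ Γ, sdMul τ a b ∈ Γ)
    (hΓinv : ∀ a ∈ Γ, sdInv τ a ∈ Γ)
    (hΓab : ∀ a ∈ Γ, ∀ b ∈ Γ, sdMul τ a b = sdMul τ b a) :
    ∃ W : Submodule ℝ V, ∃ g : K × V, ∃ S : Set (K × V), IsCompact S ∧
      (∀ γ ∈ Γ, ∃ w ∈ W, ∃ s ∈ S, γ = sdMul τ g (sdMul τ ((1 : K), w) s)) ∧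
      (∀ w ∈ W, ∃ γ ∈ Γ, ∃ s ∈ S, ((1 : K), w) = sdMul τ g (sdMul τ γ s)) := by
  classical
  -- uniform bound on the operators τ k
  obtain ⟨M, hM1, hMb⟩ : ∃ M : ℝ, 1 ≤ M ∧ ∀ (k : K) (v : V), ‖τ k v‖ ≤ M * ‖v‖ := by
    have hcomp : IsCompact ((fun p : K × V => τ p.1 p.2) ''
        (Set.univ ×ˢ Metric.closedBall 0 1)) :=
      (isCompact_univ.prod (isCompact_closedBall 0 1)).image hτ
    obtain ⟨M₀, hM₀⟩ := isBounded_iff_forall_norm_le.mp hcomp.isBounded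
    refine ⟨max M₀ 1, le_max_right _ _, fun k v => ?_⟩
    rcases eq_or_ne v 0 with rfl | hv
    · simp
    · have hnv : (0:ℝ) < ‖v‖ := norm_pos_iff.mpr hv
      have hmem : τ k (‖v‖⁻¹ • v) ∈ (fun p : K × V => τ p.1 p.2) ''
          (Set.univ ×ˢ Metric.closedBall 0 1) := by
        refine ⟨(k, ‖v‖⁻¹ • v), ⟨Set.mem_univ _, ?_⟩, rfl⟩
        simp [Metric.mem_closedBall, norm_smul, inv_mul_cancel₀ hnv.ne']
      have h1 : ‖τ k (‖v‖⁻¹ • v)‖ ≤ M₀ := hM₀ _ hmem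
      rw [map_smul, norm_smul, Real.norm_eq_abs, abs_of_pos (inv_pos.mpr hnv)] at h1
      have h2 : ‖τ k v‖ ≤ M₀ * ‖v‖ := by
        rw [inv_mul_le_iff₀ hnv] at h1
        linarith [h1]
      calc ‖τ k v‖ ≤ M₀ * ‖v‖ := h2
        _ ≤ max M₀ 1 * ‖v‖ := by gcongr; exact le_max_left _ _
  -- the common fixed subspace
  set F : Submodule ℝ V :=
    { carrier := {v | ∀ γ ∈ Γ, τ γ.1 v = v}
      add_mem' := by intro a b ha hb; intro γ hγ; rw [map_add, ha γ hγ, hb γ hγ]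
      zero_mem' := by intro γ hγ; rw [map_zero]
      smul_mem' := by intro c a ha; intro γ hγ; rw [map_smul, ha γ hγ] } with hFdef
  have hFmem : ∀ v : V, v ∈ F ↔ ∀ γ ∈ Γ, τ γ.1 v = v := fun v => Iff.rfl
  -- the coboundary span
  set D : Set V := {v | ∃ γ ∈ Γ, ∃ w : V, v = τ γ.1 w - w} with hDdef
  set V₀ : Submodule ℝ V := Submodule.span ℝ D with hV₀def
  -- F ∩ V₀ = 0, by the averaging argument
  have hFV₀ : ∀ v, v ∈ F → v ∈ V₀ → v = 0 := by
    intro v hvF hvV₀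
    obtain ⟨r, d, hd, hsum⟩ := span_eq_sums D
      (by
        rintro c x ⟨γ, hγ, w, rfl⟩
        exact ⟨γ, hγ, c • w, by rw [map_smul, smul_sub]⟩) hvV₀
    choose γg hγg wg hwg using hd
    refine key_zero r (fun j => τ (γg j).1) M (∑ j, ‖wg j‖) hM1
      (Finset.sum_nonneg fun j _ => norm_nonneg _) ?_ ?_ v ?_ ?_
    · intro i j
      have hcommK : (γg i).1 * (γg j).1 = (γg j).1 * (γg i).1 := by
        have := hΓab _ (hγg i) _ (hγg j)
        simpa [sdMul, Prod.ext_iff] using congrArg Prod.fst this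
      rw [← map_mul, ← map_mul, hcommK]
    · intro j n u
      rw [← map_pow]
      exact hMb _ u
    · intro j
      exact hvF _ (hγg j)
    · intro ε hε
      refine ⟨wg, fun j => ?_, ?_⟩
      · exact Finset.single_le_sum (fun i _ => norm_nonneg (wg i)) (Finset.mem_univ j)
      · have : v - ∑ j, (τ (γg j).1 (wg j) - wg j) = 0 := by
          rw [hsum]
          refine sub_eq_zero.mpr (Finset.sum_congr rfl fun j _ => hwg j)
        rw [this, norm_zero]
        exact hε.le
  -- F as an infimum of kernels, and a finite subfamily
  have hFinf : (⨅ γ : ↥Γ, LinearMap.ker ((τ (γ:K×V).1 : V →ₗ[ℝ] V) - LinearMap.id)) = F := by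
    ext v
    rw [Submodule.mem_iInf, hFmem]
    constructor
    · intro h γ hγ
      have := h ⟨γ, hγ⟩
      rw [LinearMap.mem_ker, LinearMap.sub_apply, LinearMap.id_apply, sub_eq_zero] at this
      exact this
    · intro h γ
      rw [LinearMap.mem_ker, LinearMap.sub_apply, LinearMap.id_apply, sub_eq_zero]
      exact h γ γ.2
  obtain ⟨s, hs⟩ := finset_iInf
    (fun γ : ↥Γ => LinearMap.ker ((τ (γ:K×V).1 : V →ₗ[ℝ] V) - LinearMap.id))
  rw [hFinf] at hs
  -- a complement of F containing V₀
  obtain ⟨U, hU⟩ := Submodule.exists_isCompl (F ⊔ V₀)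
  set V₁ : Submodule ℝ V := V₀ ⊔ U with hV₁def
  have hdisj : Disjoint F V₁ := by
    rw [Submodule.disjoint_def]
    intro x hxF hxV₁
    obtain ⟨a, haV₀, b, hbU, hab⟩ := Submodule.mem_sup.mp hxV₁
    have hbFV₀ : b ∈ F ⊔ V₀ := by
      have hx' : x ∈ F ⊔ V₀ := Submodule.mem_sup_left hxF
      have ha' : a ∈ F ⊔ V₀ := Submodule.mem_sup_right haV₀
      have : b = x - a := by rw [← hab]; abel
      rw [this]
      exact Submodule.sub_mem _ hx' ha'
    have hb0 : b = 0 := Submodule.disjoint_def.mp hU.disjoint b hbFV₀ hbU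
    have hxa : x = a := by rw [← hab, hb0, add_zero]
    exact hFV₀ x hxF (hxa ▸ haV₀)
  have hcodis : Codisjoint F V₁ := by
    rw [codisjoint_iff]
    rw [hV₁def, ← sup_assoc]
    exact codisjoint_iff.mp hU.codisjoint
  have hcompl : IsCompl F V₁ := ⟨hdisj, hcodis⟩
  -- the projection onto F along V₁
  set P : V →ₗ[ℝ] V := F.subtype ∘ₗ Submodule.linearProjOfIsCompl F V₁ hcompl with hPdef
  have hPF : ∀ v : V, P v ∈ F := fun v => (Submodule.linearProjOfIsCompl F V₁ hcompl v).2
  have hPid : ∀ v ∈ F, P v = v := by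
    intro v hv
    have := Submodule.linearProjOfIsCompl_apply_left hcompl (⟨v, hv⟩ : F)
    exact congrArg (Submodule.subtype F) this
  have hPzero : ∀ v ∈ V₁, P v = 0 := by
    intro v hv
    have := Submodule.linearProjOfIsCompl_apply_right' hcompl hv
    simp [hPdef, Submodule.linearProjOfIsCompl, this]
  -- P kills coboundaries
  have hPdrop : ∀ γ ∈ Γ, ∀ w : V, P (τ γ.1 w) = P w := by
    intro γ hγ w
    have hmem : τ γ.1 w - w ∈ V₁ :=
      le_sup_left (α := Submodule ℝ V) (Submodule.subset_span ⟨γ, hγ, w, rfl⟩)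
    have h0 := hPzero _ hmem
    rw [map_sub, sub_eq_zero] at h0
    exact h0
  have hPadd : ∀ a ∈ Γ, ∀ b ∈ Γ, P ((sdMul τ a b).2) = P a.2 + P b.2 := by
    intro a ha b hb
    show P (a.2 + τ a.1 b.2) = _
    rw [map_add, hPdrop a ha b.2]
  have hPneg : ∀ a ∈ Γ, P ((sdInv τ a).2) = - P a.2 := by
    intro a ha
    show P (-(τ a.1⁻¹ a.2)) = _
    rw [map_neg, neg_inj]
    exact hPdrop (sdInv τ a) (hΓinv a ha) a.2
  -- the image subgroup in F
  set A : AddSubgroup V :=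
    { carrier := {v | ∃ x ∈ Γ, P x.2 = v}
      zero_mem' := ⟨((1:K), (0:V)), hΓ1, by simp⟩
      add_mem' := by
        rintro v w ⟨x, hx, rfl⟩ ⟨y, hy, rfl⟩
        exact ⟨sdMul τ x y, hΓmul x hx y hy, hPadd x hx y hy⟩
      neg_mem' := by
        rintro v ⟨x, hx, rfl⟩
        exact ⟨sdInv τ x, hΓinv x hx, hPneg x hx⟩ } with hAdef
  have hAmem : ∀ v : V, v ∈ A ↔ ∃ x ∈ Γ, P x.2 = v := fun v => Iff.rfl
  -- the candidate subspace
  set W : Submodule ℝ V := Submodule.span ℝ (A : Set V) with hWdef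
  -- quantitative injectivity on V₁
  set g : V → ℝ := fun v => ∑ γ ∈ s, ‖τ (γ:K×V).1 v - v‖ with hgdef
  obtain ⟨ε, hεpos, hε⟩ : ∃ ε > (0:ℝ), ∀ v ∈ V₁, ε * ‖v‖ ≤ g v := by
    refine min_on_subspace V₁ g ?_ ?_ ?_ ?_
    · refine continuous_finset_sum _ fun γ _ => ?_
      exact ((τ (γ:K×V).1).continuous_of_finiteDimensional.sub continuous_id).norm
    · intro v
      exact Finset.sum_nonneg fun γ _ => norm_nonneg _
    · intro c v
      rw [hgdef, Finset.mul_sum]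
      refine Finset.sum_congr rfl fun γ _ => ?_
      rw [map_smul, ← smul_sub, norm_smul, Real.norm_eq_abs]
    · intro v hvV₁ hgv
      have hterm : ∀ γ ∈ s, ‖τ (γ:K×V).1 v - v‖ = 0 :=
        (Finset.sum_eq_zero_iff_of_nonneg fun γ _ => norm_nonneg _).mp hgv
      have hvF : v ∈ F := by
        rw [← hs, Submodule.mem_iInf]
        intro γ
        rw [Submodule.mem_iInf]
        intro hγs
        rw [LinearMap.mem_ker, LinearMap.sub_apply, LinearMap.id_apply, sub_eq_zero]
        exact sub_eq_zero.mp (norm_eq_zero.mp (hterm γ hγs))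
      exact Submodule.disjoint_def.mp hdisj v hvF hvV₁
  -- the uniform bound on the V₁-components of Γ
  set C₁ : ℝ := (M + 1) * ∑ γ ∈ s, ‖(γ:K×V).2‖ with hC₁def
  have hC₁0 : 0 ≤ C₁ := by
    refine mul_nonneg (by linarith) (Finset.sum_nonneg fun γ _ => norm_nonneg _)
  set C : ℝ := ε⁻¹ * C₁ with hCdef
  have hC0 : 0 ≤ C := mul_nonneg (inv_nonneg.mpr hεpos.le) hC₁0
  have hXbound : ∀ x ∈ Γ, ‖x.2 - P x.2‖ ≤ C := by
    intro x hx
    have hmem : x.2 - P x.2 ∈ V₁ := by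
      have hx' : x.2 ∈ F ⊔ V₁ := by rw [codisjoint_iff.mp hcodis]; trivial
      obtain ⟨a, haF, b, hbV₁, hab⟩ := Submodule.mem_sup.mp hx'
      have hPa : P x.2 = a := by
        rw [← hab, map_add, hPid a haF, hPzero b hbV₁, add_zero]
      rw [hPa, ← hab]
      simpa using hbV₁
    have h1 : ε * ‖x.2 - P x.2‖ ≤ g (x.2 - P x.2) := hε _ hmem
    have h2 : g (x.2 - P x.2) = ∑ γ ∈ s, ‖τ (γ:K×V).1 x.2 - x.2‖ := by
      refine Finset.sum_congr rfl fun γ _ => ?_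
      congr 1
      have hfix : τ (γ:K×V).1 (P x.2) = P x.2 := (hPF x.2) _ (γ:↥Γ).2
      rw [map_sub, hfix]
      abel
    have h3 : ∑ γ ∈ s, ‖τ (γ:K×V).1 x.2 - x.2‖ ≤ C₁ := by
      rw [hC₁def, Finset.mul_sum]
      refine Finset.sum_le_sum fun γ _ => ?_
      have habrel : τ (γ:K×V).1 x.2 - x.2 = τ x.1 (γ:K×V).2 - (γ:K×V).2 := by
        have := hΓab x hx (γ:K×V) (γ:↥Γ).2
        have h2nd := congrArg Prod.snd this
        simp only [sdMul] at h2nd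
        have : x.2 + τ x.1 (γ:K×V).2 = (γ:K×V).2 + τ (γ:K×V).1 x.2 := h2nd
        linear_combination (norm := abel) -this
      rw [habrel]
      calc ‖τ x.1 (γ:K×V).2 - (γ:K×V).2‖ ≤ ‖τ x.1 (γ:K×V).2‖ + ‖(γ:K×V).2‖ := norm_sub_le _ _
        _ ≤ M * ‖(γ:K×V).2‖ + ‖(γ:K×V).2‖ := by gcongr; exact hMb _ _
        _ = (M + 1) * ‖(γ:K×V).2‖ := by ring
    have h4 : ε * ‖x.2 - P x.2‖ ≤ C₁ := le_trans h1 (le_trans (le_of_eq h2) h3)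
    rw [hCdef, le_inv_mul_iff₀ hεpos]
    exact h4
  -- the lattice approximation
  obtain ⟨C₃, hC₃0, hC₃⟩ := lattice_approx A
  -- the compact set
  set R : ℝ := C + M * (C₃ + C) with hRdef
  have hCR : C ≤ R := by nlinarith
  set S : Set (K × V) := Set.univ ×ˢ Metric.closedBall (0:V) R with hSdef
  refine ⟨W, ((1:K), (0:V)), S, (isCompact_univ.prod (isCompact_closedBall 0 R)), ?_, ?_⟩
  · -- Γ ⊆ W S
    intro γ hγ
    refine ⟨P γ.2, Submodule.subset_span ⟨γ, hγ, rfl⟩, (γ.1, γ.2 - P γ.2), ?_, ?_⟩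
    · refine ⟨Set.mem_univ _, ?_⟩
      rw [Metric.mem_closedBall, dist_zero_right]
      exact le_trans (hXbound γ hγ) hCR
    · have : sdMul τ ((1:K), (0:V)) (sdMul τ ((1:K), P γ.2) (γ.1, γ.2 - P γ.2)) =
          (γ.1, γ.2) := by
        simp [sdMul, map_one]
      rw [this]
  · -- W ⊆ Γ S
    intro w hw
    obtain ⟨a, haA, hwa⟩ := hC₃ w (hWdef ▸ hw)
    obtain ⟨x, hx, hPa⟩ := (hAmem a).mp haA
    have hwx : ‖w - x.2‖ ≤ C₃ + C := by
      calc ‖w - x.2‖ = ‖(w - a) + (P x.2 - x.2)‖ := by rw [hPa]; congr 1; abel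
        _ ≤ ‖w - a‖ + ‖P x.2 - x.2‖ := norm_add_le _ _
        _ ≤ C₃ + C := by
            have := hXbound x hx
            rw [norm_sub_rev] at this
            linarith [hwa]
    refine ⟨x, hx, (x.1⁻¹, τ x.1⁻¹ (w - x.2)), ?_, ?_⟩
    · refine ⟨Set.mem_univ _, ?_⟩
      rw [Metric.mem_closedBall, dist_zero_right]
      calc ‖τ x.1⁻¹ (w - x.2)‖ ≤ M * ‖w - x.2‖ := hMb _ _
        _ ≤ M * (C₃ + C) := by gcongr
        _ ≤ R := by nlinarith
    · have hττ : τ x.1 (τ x.1⁻¹ (w - x.2)) = w - x.2 := by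
        rw [← Module.End.mul_apply, ← map_mul, mul_inv_cancel, map_one, Module.End.one_apply]
      have hinner : sdMul τ x (x.1⁻¹, τ x.1⁻¹ (w - x.2)) = ((1:K), w) := by
        show (x.1 * x.1⁻¹, x.2 + τ x.1 (τ x.1⁻¹ (w - x.2))) = ((1:K), w)
        rw [hττ, mul_inv_cancel]
        refine Prod.ext_iff.mpr ⟨rfl, ?_⟩
        show x.2 + (w - x.2) = w
        abel
      rw [hinner]
      have : sdMul τ ((1:K), (0:V)) ((1:K), w) = ((1:K), w) := by
        simp [sdMul, map_one]
      rw [this]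
end

section
/- Let p, q be positive integers. Suppose there exists a bilinear map f : ℝ^(p+1) × ℝ^q → ℝ^q such that f(v,w) = 0 implies v = 0 or w = 0. Then there exist p continuous vector fields Z₁,…,Z_p on the sphere S^(q-1) ⊆ ℝ^q that are linearly independent at every point (i.e., for each w ∈ S^(q-1), the vectors Z₁(w),…,Z_p(w) are tangent to S^(q-1) at w and linearly independent). -/
open scoped RealInnerProductSpace

/-- If there is a bilinear map `f : ℝ^(p+1) × ℝ^q → ℝ^q` with
`f(v,w) = 0 → v = 0 ∨ w = 0`, then there exist `p` continuous vector fields on the sphere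
`S^(q-1) ⊆ ℝ^q` which are tangent and linearly independent at every point. -/
theorem stmt_8 (p q : ℕ) (hp : 0 < p) (hq : 0 < q)
    (f : EuclideanSpace ℝ (Fin (p + 1)) →ₗ[ℝ]
          EuclideanSpace ℝ (Fin q) →ₗ[ℝ] EuclideanSpace ℝ (Fin q))
    (hf : ∀ v w, f v w = 0 → v = 0 ∨ w = 0) :
    ∃ Z : Fin p → (Metric.sphere (0 : EuclideanSpace ℝ (Fin q)) 1 →
          EuclideanSpace ℝ (Fin q)),
      (∀ i, Continuous (Z i)) ∧
      ∀ w : Metric.sphere (0 : EuclideanSpace ℝ (Fin q)) 1,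
        (∀ i, ⟪Z i w, (w : EuclideanSpace ℝ (Fin q))⟫ = 0) ∧
        LinearIndependent ℝ (fun i => Z i w) := by
  classical
  set e : Fin (p + 1) → EuclideanSpace ℝ (Fin (p + 1)) :=
    fun i => EuclideanSpace.single i 1 with he
  have he0 : e 0 ≠ 0 := by
    intro h
    have := congrArg (fun x => x 0) h
    simp [he, EuclideanSpace.single_apply] at this
  set g : EuclideanSpace ℝ (Fin q) →ₗ[ℝ] EuclideanSpace ℝ (Fin q) := f (e 0) with hg
  have hginj : Function.Injective g := by
    rw [← LinearMap.ker_eq_bot, LinearMap.ker_eq_bot']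
    intro w hw
    rcases hf (e 0) w hw with h | h
    · exact absurd h he0
    · exact h
  have hgsurj : Function.Surjective g :=
    (LinearMap.injective_iff_surjective).mp hginj
  let G : EuclideanSpace ℝ (Fin q) ≃ₗ[ℝ] EuclideanSpace ℝ (Fin q) :=
    LinearEquiv.ofBijective g ⟨hginj, hgsurj⟩
  have hG : ∀ w, g (G.symm w) = w := fun w => G.apply_symm_apply w
  set u : Fin p → EuclideanSpace ℝ (Fin q) → EuclideanSpace ℝ (Fin q) :=
    fun i w => f (e i.succ) (G.symm w) with hu
  refine ⟨fun i w => u i w - ⟪u i w, (w : EuclideanSpace ℝ (Fin q))⟫ • (w : EuclideanSpace ℝ (Fin q)), ?_, ?_⟩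
  · intro i
    have hcu : Continuous (u i) :=
      ((f (e i.succ)).continuous_of_finiteDimensional).comp
        (G.symm.toLinearMap.continuous_of_finiteDimensional)
    exact ((hcu.comp continuous_subtype_val).sub
      ((Continuous.inner (𝕜 := ℝ) (hcu.comp continuous_subtype_val) continuous_subtype_val).smul
        continuous_subtype_val))
  · intro w
    have hw1 : ‖(w : EuclideanSpace ℝ (Fin q))‖ = 1 :=
      mem_sphere_zero_iff_norm.mp w.2
    have hwinner : ⟪(w : EuclideanSpace ℝ (Fin q)), (w : EuclideanSpace ℝ (Fin q))⟫ = 1 := by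
      rw [real_inner_self_eq_norm_sq, hw1]; norm_num
    have hwne : (w : EuclideanSpace ℝ (Fin q)) ≠ 0 := by
      intro h; rw [h] at hw1; simp at hw1
    constructor
    · intro i
      rw [inner_sub_left, real_inner_smul_left, hwinner]
      ring
    · rw [Fintype.linearIndependent_iff]
      intro c hc i
      set lam : ℝ := ∑ j, c j * ⟪u j (w : EuclideanSpace ℝ (Fin q)), (w : EuclideanSpace ℝ (Fin q))⟫ with hlam
      set v : EuclideanSpace ℝ (Fin (p + 1)) :=
        (∑ j, c j • e j.succ) - lam • e 0 with hv
      have hfv : f v (G.symm (w : EuclideanSpace ℝ (Fin q))) = 0 := by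
        have expand : f v (G.symm (w : EuclideanSpace ℝ (Fin q)))
            = (∑ j, c j • u j (w : EuclideanSpace ℝ (Fin q)))
              - lam • (w : EuclideanSpace ℝ (Fin q)) := by
          simp only [hv, map_sub, map_sum, map_smul, LinearMap.sub_apply,
            LinearMap.sum_apply, LinearMap.smul_apply, hu]
          rw [← hg, hG]
        rw [expand]
        have : ∑ j, c j • u j (w : EuclideanSpace ℝ (Fin q))
            = lam • (w : EuclideanSpace ℝ (Fin q)) := by
          have hc' := hc
          have : ∑ j, c j • (u j (w : EuclideanSpace ℝ (Fin q))
              - ⟪u j (w : EuclideanSpace ℝ (Fin q)), (w : EuclideanSpace ℝ (Fin q))⟫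
                • (w : EuclideanSpace ℝ (Fin q))) = 0 := hc'
          have h2 : (∑ j, c j • u j (w : EuclideanSpace ℝ (Fin q)))
              - ∑ j, c j • (⟪u j (w : EuclideanSpace ℝ (Fin q)),
                  (w : EuclideanSpace ℝ (Fin q))⟫ • (w : EuclideanSpace ℝ (Fin q))) = 0 := by
            rw [← Finset.sum_sub_distrib]
            simpa [smul_sub] using this
          have h3 : ∑ j, c j • (⟪u j (w : EuclideanSpace ℝ (Fin q)),
              (w : EuclideanSpace ℝ (Fin q))⟫ • (w : EuclideanSpace ℝ (Fin q)))
              = lam • (w : EuclideanSpace ℝ (Fin q)) := by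
            rw [hlam, Finset.sum_smul]
            simp [smul_smul]
          rw [h3] at h2
          exact sub_eq_zero.mp h2
        rw [this, sub_self]
      have hvz : v = 0 := by
        rcases hf v (G.symm (w : EuclideanSpace ℝ (Fin q))) hfv with h | h
        · exact h
        · exact absurd (by simpa using congrArg G h) hwne
      have h4 := congrArg (EuclideanSpace.proj (𝕜 := ℝ) i.succ) hvz
      simp only [hv, he, map_sub, map_sum, map_smul, map_zero] at h4
      simpa [EuclideanSpace.single_apply, Fin.succ_ne_zero,
        (Fin.succ_injective p).eq_iff, Finset.sum_ite_eq, smul_eq_mul] using h4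
end

section
/- For positive integers p, q, the following are equivalent: (1) there exists a bilinear map f : ℝ^(p+1) × ℝ^q → ℝ^q with ‖f(v,w)‖ = ‖v‖·‖w‖ for all v, w; (2) there exists an injective linear map F : ℝ^p → M(q,ℝ) whose image is contained in the set of skew-symmetric matrices that are real scalar multiples of orthogonal matrices. -/
open Matrix Finset
open scoped RealInnerProductSpace
open scoped MatrixOrder

noncomputable def iota (p : ℕ) : EuclideanSpace ℝ (Fin p) →ₗ[ℝ] EuclideanSpace ℝ (Fin (p+1)) where
  toFun x := WithLp.toLp 2 (fun i : Fin (p+1) => if h : (i : ℕ) < p then x ⟨i, h⟩ else 0)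
  map_add' x y := by
    ext i
    by_cases h : (i : ℕ) < p <;> simp [h, PiLp.add_apply]
  map_smul' c x := by
    ext i
    by_cases h : (i : ℕ) < p <;> simp [h, PiLp.smul_apply]

lemma iota_apply_castSucc {p : ℕ} (x : EuclideanSpace ℝ (Fin p)) (k : Fin p) :
    iota p x k.castSucc = x k := by
  simp [iota]

lemma iota_apply_last {p : ℕ} (x : EuclideanSpace ℝ (Fin p)) :
    iota p x (Fin.last p) = 0 := by
  simp [iota]

lemma euclid_inner {n : ℕ} (x y : EuclideanSpace ℝ (Fin n)) :
    ⟪x, y⟫ = ∑ i, x i * y i := by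
  simp [PiLp.inner_apply, RCLike.inner_apply, mul_comm]

lemma inner_single_iota {p : ℕ} (x : EuclideanSpace ℝ (Fin p)) :
    ⟪EuclideanSpace.single (Fin.last p) (1:ℝ), iota p x⟫ = 0 := by
  rw [euclid_inner, Fin.sum_univ_castSucc]
  simp [EuclideanSpace.single_apply, iota_apply_last]

lemma inner_iota {p : ℕ} (x y : EuclideanSpace ℝ (Fin p)) :
    ⟪iota p x, iota p y⟫ = ⟪x, y⟫ := by
  rw [euclid_inner, euclid_inner, Fin.sum_univ_castSucc]
  simp [iota_apply_castSucc, iota_apply_last]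

lemma key1 {p q : ℕ} (f : EuclideanSpace ℝ (Fin (p+1)) →ₗ[ℝ]
      EuclideanSpace ℝ (Fin q) →ₗ[ℝ] EuclideanSpace ℝ (Fin q))
    (hf : ∀ v w, ‖f v w‖ = ‖v‖ * ‖w‖) (v u : EuclideanSpace ℝ (Fin (p+1)))
    (w : EuclideanSpace ℝ (Fin q)) :
    ⟪f v w, f u w⟫ = ⟪v, u⟫ * (‖w‖ * ‖w‖) := by
  rw [real_inner_eq_norm_add_mul_self_sub_norm_mul_self_sub_norm_mul_self_div_two,
      real_inner_eq_norm_add_mul_self_sub_norm_mul_self_sub_norm_mul_self_div_two]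
  have : f v w + f u w = f (v + u) w := by simp
  rw [this, hf, hf, hf]
  ring

lemma key2 {p q : ℕ} (f : EuclideanSpace ℝ (Fin (p+1)) →ₗ[ℝ]
      EuclideanSpace ℝ (Fin q) →ₗ[ℝ] EuclideanSpace ℝ (Fin q))
    (hf : ∀ v w, ‖f v w‖ = ‖v‖ * ‖w‖) (v u : EuclideanSpace ℝ (Fin (p+1)))
    (w w' : EuclideanSpace ℝ (Fin q)) :
    ⟪f v w, f u w'⟫ + ⟪f v w', f u w⟫ = 2 * ⟪v, u⟫ * ⟪w, w'⟫ := by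
  have h1 := key1 f hf v u (w + w')
  have h2 := key1 f hf v u w
  have h3 := key1 f hf v u w'
  have hw : ‖w + w'‖ * ‖w + w'‖ = ‖w‖*‖w‖ + 2 * ⟪w,w'⟫ + ‖w'‖*‖w'‖ := by
    have := real_inner_eq_norm_add_mul_self_sub_norm_mul_self_sub_norm_mul_self_div_two w w'
    linarith
  have he : f v (w + w') = f v w + f v w' := by simp
  have he' : f u (w + w') = f u w + f u w' := by simp
  rw [he, he', inner_add_left, inner_add_right, inner_add_right] at h1
  rw [hw] at h1
  linarith

lemma g_entry {q : ℕ} (T : EuclideanSpace ℝ (Fin q) →ₗ[ℝ] EuclideanSpace ℝ (Fin q))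
    (i j : Fin q) :
    (Matrix.toEuclideanLin.symm T : Matrix (Fin q) (Fin q) ℝ) i j
      = T (EuclideanSpace.single j 1) i := by
  set M := (Matrix.toEuclideanLin.symm T : Matrix (Fin q) (Fin q) ℝ)
  have hT : Matrix.toEuclideanLin M = T := Matrix.toEuclideanLin.apply_symm_apply T
  have := congrArg (fun S => S (EuclideanSpace.single j (1:ℝ)) i) hT
  simp only at this
  rw [← this, Matrix.toEuclideanLin_apply]
  simp [Matrix.mulVec_single]

lemma gram {q : ℕ} (T S : EuclideanSpace ℝ (Fin q) →ₗ[ℝ] EuclideanSpace ℝ (Fin q))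
    (i j : Fin q) :
    ((Matrix.toEuclideanLin.symm T : Matrix (Fin q) (Fin q) ℝ)ᵀ
        * (Matrix.toEuclideanLin.symm S : Matrix (Fin q) (Fin q) ℝ)) i j
      = ⟪T (EuclideanSpace.single i 1), S (EuclideanSpace.single j 1)⟫ := by
  rw [euclid_inner, Matrix.mul_apply]
  simp only [Matrix.transpose_apply, g_entry]

theorem fwd (p q : ℕ) (hq : 0 < q)
    (f : EuclideanSpace ℝ (Fin (p + 1)) →ₗ[ℝ]
            EuclideanSpace ℝ (Fin q) →ₗ[ℝ] EuclideanSpace ℝ (Fin q))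
    (hf : ∀ v w, ‖f v w‖ = ‖v‖ * ‖w‖) :
    (∃ F : EuclideanSpace ℝ (Fin p) →ₗ[ℝ] Matrix (Fin q) (Fin q) ℝ,
        Function.Injective F ∧
        ∀ x, (F x)ᵀ = -(F x) ∧
          ∃ c : ℝ, ∃ A : Matrix (Fin q) (Fin q) ℝ, Aᵀ * A = 1 ∧ F x = c • A) := by
  classical
  set e : EuclideanSpace ℝ (Fin (p+1)) := EuclideanSpace.single (Fin.last p) 1 with he
  set g : (EuclideanSpace ℝ (Fin (p+1))) → Matrix (Fin q) (Fin q) ℝ :=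
    fun v => Matrix.toEuclideanLin.symm (f v) with hg
  have hgram : ∀ v u : EuclideanSpace ℝ (Fin (p+1)),
      (g v)ᵀ * (g u) + (g u)ᵀ * (g v) = (2 * ⟪v,u⟫) • (1 : Matrix (Fin q) (Fin q) ℝ) := by
    intro v u
    ext i j
    rw [Matrix.add_apply, hg]
    rw [_root_.gram, _root_.gram, Matrix.smul_apply, Matrix.one_apply]
    have hk := key2 f hf v u (EuclideanSpace.single i 1) (EuclideanSpace.single j 1)
    have hc : ⟪(f u) (EuclideanSpace.single i 1), (f v) (EuclideanSpace.single j 1)⟫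
        = ⟪(f v) (EuclideanSpace.single j 1), (f u) (EuclideanSpace.single i 1)⟫ :=
      real_inner_comm _ _
    rw [hc, hk, euclid_inner]
    by_cases h : i = j <;>
      simp [EuclideanSpace.single_apply, h, Finset.sum_ite_eq, mul_ite]
    exact Or.inr (by simp [EuclideanSpace.inner_single_left, EuclideanSpace.single_apply, Ne.symm h])
  have haux : ∀ v : EuclideanSpace ℝ (Fin (p+1)), (g v)ᵀ * g v = ⟪v,v⟫ • 1 := by
    intro v
    have h := hgram v v
    have h2 : (2:ℝ) • ((g v)ᵀ * g v) = (2:ℝ) • (⟪v,v⟫ • (1 : Matrix (Fin q) (Fin q) ℝ)) := by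
      rw [two_smul _ ((g v)ᵀ * g v), h, smul_smul]
    exact smul_right_injective _ (two_ne_zero) h2
  have hee : ⟪e, e⟫ = 1 := by
    rw [real_inner_self_eq_norm_mul_norm, he, EuclideanSpace.norm_single]
    norm_num
  have horth : (g e)ᵀ * g e = 1 := by rw [haux, hee, one_smul]
  have horth' : g e * (g e)ᵀ = 1 := mul_eq_one_comm.mp horth
  set F : EuclideanSpace ℝ (Fin p) →ₗ[ℝ] Matrix (Fin q) (Fin q) ℝ :=
    (LinearMap.mulLeft ℝ ((g e)ᵀ)) ∘ₗ
      ((Matrix.toEuclideanLin.symm.toLinearMap : (EuclideanSpace ℝ (Fin q) →ₗ[ℝ]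
          EuclideanSpace ℝ (Fin q)) →ₗ[ℝ] Matrix (Fin q) (Fin q) ℝ) ∘ₗ (f ∘ₗ iota p)) with hF
  have hFx : ∀ x, F x = (g e)ᵀ * g (iota p x) := fun x => rfl
  have hsq : ∀ x, (F x)ᵀ * F x = ⟪x,x⟫ • 1 := by
    intro x
    rw [hFx, Matrix.transpose_mul, Matrix.transpose_transpose]
    calc (g (iota p x))ᵀ * g e * ((g e)ᵀ * g (iota p x))
        = (g (iota p x))ᵀ * (g e * (g e)ᵀ) * g (iota p x) := by
          rw [Matrix.mul_assoc, Matrix.mul_assoc, Matrix.mul_assoc]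
      _ = (g (iota p x))ᵀ * g (iota p x) := by rw [horth', Matrix.mul_one]
      _ = ⟪x,x⟫ • 1 := by rw [haux, inner_iota]
  have hskew : ∀ x, (F x)ᵀ = -(F x) := by
    intro x
    have h := hgram e (iota p x)
    rw [inner_single_iota] at h
    simp only [mul_zero, zero_smul] at h
    have hz : (F x)ᵀ + F x = 0 := by
      rw [hFx, Matrix.transpose_mul, Matrix.transpose_transpose, add_comm]
      exact h
    exact eq_neg_of_add_eq_zero_left hz
  refine ⟨F, ?_, fun x => ⟨hskew x, ?_⟩⟩
  · intro a b hab
    have h0 : F (a - b) = 0 := by rw [map_sub, hab, sub_self]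
    have h1 := hsq (a - b)
    rw [h0] at h1
    have h2 := congrArg (fun M => M ⟨0, hq⟩ ⟨0, hq⟩) h1
    simp only [Matrix.transpose_zero, Matrix.mul_zero, Matrix.zero_apply,
      Matrix.smul_apply, Matrix.one_apply_eq, smul_eq_mul, mul_one] at h2
    have : a - b = 0 := by
      have := inner_self_eq_zero (𝕜 := ℝ) (x := a - b)
      exact this.mp h2.symm
    exact sub_eq_zero.mp this

  · by_cases hx : x = 0
    · exact ⟨0, 1, by rw [Matrix.transpose_one, Matrix.one_mul], by rw [hx, map_zero, zero_smul]⟩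
    · refine ⟨‖x‖, ‖x‖⁻¹ • F x, ?_, ?_⟩
      · rw [Matrix.transpose_smul, Matrix.smul_mul, Matrix.mul_smul, hsq, smul_smul, smul_smul]
        have hn : ‖x‖ ≠ 0 := norm_ne_zero_iff.mpr hx
        rw [real_inner_self_eq_norm_mul_norm]
        have hone : ‖x‖⁻¹ * ‖x‖⁻¹ * (‖x‖ * ‖x‖) = 1 := by field_simp
        rw [hone, one_smul]
      · rw [smul_smul]
        have hn : ‖x‖ ≠ 0 := norm_ne_zero_iff.mpr hx
        rw [mul_inv_cancel₀ hn, one_smul]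


lemma euclid_sum_repr {p : ℕ} (x : EuclideanSpace ℝ (Fin p)) :
    x = ∑ k, x k • EuclideanSpace.single k (1:ℝ) := by
  have h := (EuclideanSpace.basisFun (Fin p) ℝ).sum_repr x
  conv_lhs => rw [← h]
  refine Finset.sum_congr rfl fun k _ => ?_
  rw [EuclideanSpace.basisFun_repr, EuclideanSpace.basisFun_apply]

noncomputable def proj' (p : ℕ) : EuclideanSpace ℝ (Fin (p+1)) →ₗ[ℝ] EuclideanSpace ℝ (Fin p) where
  toFun v := WithLp.toLp 2 (fun k : Fin p => v k.castSucc)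
  map_add' x y := by ext k; simp [PiLp.add_apply]
  map_smul' c x := by ext k; simp [PiLp.smul_apply]

lemma bilin_eq_matrix {p : ℕ} (Bl : EuclideanSpace ℝ (Fin p) →ₗ[ℝ] EuclideanSpace ℝ (Fin p) →ₗ[ℝ] ℝ)
    (x y : EuclideanSpace ℝ (Fin p)) :
    Bl x y = x ⬝ᵥ ((Matrix.of fun k l =>
      Bl (EuclideanSpace.single k 1) (EuclideanSpace.single l 1)) *ᵥ y) := by
  have hrow : ∀ z : EuclideanSpace ℝ (Fin p),
      Bl z y = ∑ l, y l * Bl z (EuclideanSpace.single l 1) := by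
    intro z
    conv_lhs => rw [euclid_sum_repr y]
    rw [map_sum]
    exact Finset.sum_congr rfl fun l _ => by rw [LinearMap.map_smul, smul_eq_mul]
  have hcol : Bl x y = ∑ k, x k * Bl (EuclideanSpace.single k 1) y := by
    conv_lhs => rw [euclid_sum_repr x]
    rw [map_sum, LinearMap.sum_apply]
    exact Finset.sum_congr rfl fun k _ =>
      by rw [LinearMap.map_smul, LinearMap.smul_apply, smul_eq_mul]
  rw [hcol]
  simp only [dotProduct, Matrix.mulVec, Matrix.of_apply]
  refine Finset.sum_congr rfl fun k _ => ?_
  rw [hrow, Finset.mul_sum, Finset.mul_sum]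
  exact Finset.sum_congr rfl fun l _ => by ring

noncomputable def mvE {q : ℕ} (A : Matrix (Fin q) (Fin q) ℝ) (w : EuclideanSpace ℝ (Fin q)) :
    EuclideanSpace ℝ (Fin q) := WithLp.toLp 2 (A *ᵥ w)

lemma mvE_add_mat {q : ℕ} (A B : Matrix (Fin q) (Fin q) ℝ) (w : EuclideanSpace ℝ (Fin q)) :
    mvE (A + B) w = mvE A w + mvE B w := by simp [mvE, Matrix.add_mulVec]

lemma mvE_smul_mat {q : ℕ} (c : ℝ) (A : Matrix (Fin q) (Fin q) ℝ) (w : EuclideanSpace ℝ (Fin q)) :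
    mvE (c • A) w = c • mvE A w := by simp [mvE, Matrix.smul_mulVec]

lemma mvE_add {q : ℕ} (A : Matrix (Fin q) (Fin q) ℝ) (w w' : EuclideanSpace ℝ (Fin q)) :
    mvE A (w + w') = mvE A w + mvE A w' := by simp [mvE, Matrix.mulVec_add]

lemma mvE_smul {q : ℕ} (A : Matrix (Fin q) (Fin q) ℝ) (c : ℝ) (w : EuclideanSpace ℝ (Fin q)) :
    mvE A (c • w) = c • mvE A w := by simp [mvE, Matrix.mulVec_smul]

theorem bwd (p q : ℕ) (hq : 0 < q)
    (F : EuclideanSpace ℝ (Fin p) →ₗ[ℝ] Matrix (Fin q) (Fin q) ℝ)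
    (hinj : Function.Injective F)
    (hprop : ∀ x, (F x)ᵀ = -(F x) ∧
          ∃ c : ℝ, ∃ A : Matrix (Fin q) (Fin q) ℝ, Aᵀ * A = 1 ∧ F x = c • A) :
    (∃ f : EuclideanSpace ℝ (Fin (p + 1)) →ₗ[ℝ]
            EuclideanSpace ℝ (Fin q) →ₗ[ℝ] EuclideanSpace ℝ (Fin q),
        ∀ v w, ‖f v w‖ = ‖v‖ * ‖w‖) := by
  classical
  have hqR : (q : ℝ) ≠ 0 := Nat.cast_ne_zero.mpr hq.ne'
  -- the bilinear form
  set Bl : EuclideanSpace ℝ (Fin p) →ₗ[ℝ] EuclideanSpace ℝ (Fin p) →ₗ[ℝ] ℝ :=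
    LinearMap.mk₂ ℝ (fun x y => Matrix.trace ((F x)ᵀ * F y) / q)
      (fun x x' y => by
        show ((F (x + x'))ᵀ * F y).trace / (q:ℝ)
          = ((F x)ᵀ * F y).trace / q + ((F x')ᵀ * F y).trace / q
        rw [F.map_add, Matrix.transpose_add, Matrix.add_mul, Matrix.trace_add, add_div])
      (fun c x y => by
        show ((F (c • x))ᵀ * F y).trace / (q:ℝ) = c • (((F x)ᵀ * F y).trace / q)
        rw [F.map_smul, Matrix.transpose_smul, Matrix.smul_mul, Matrix.trace_smul,
          smul_eq_mul, smul_eq_mul, mul_div_assoc])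
      (fun x y y' => by
        show ((F x)ᵀ * F (y + y')).trace / (q:ℝ)
          = ((F x)ᵀ * F y).trace / q + ((F x)ᵀ * F y').trace / q
        rw [F.map_add, Matrix.mul_add, Matrix.trace_add, add_div])
      (fun c x y => by
        show ((F x)ᵀ * F (c • y)).trace / (q:ℝ) = c • (((F x)ᵀ * F y).trace / q)
        rw [F.map_smul, Matrix.mul_smul, Matrix.trace_smul, smul_eq_mul, smul_eq_mul,
          mul_div_assoc]) with hBl
  have hBl_apply : ∀ x y, Bl x y = Matrix.trace ((F x)ᵀ * F y) / q := fun _ _ => rfl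
  -- F x ᵀ * F x is scalar
  have hQ : ∀ x, (F x)ᵀ * F x = (Bl x x) • 1 := by
    intro x
    obtain ⟨c, A, hA, hcA⟩ := (hprop x).2
    have h1 : (F x)ᵀ * F x = (c * c) • (1 : Matrix (Fin q) (Fin q) ℝ) := by
      rw [hcA, Matrix.transpose_smul, Matrix.smul_mul, Matrix.mul_smul, hA, smul_smul]
    have h2 : Matrix.trace ((c*c) • (1 : Matrix (Fin q) (Fin q) ℝ)) = (c*c) * q := by
      rw [Matrix.trace_smul, Matrix.trace_one, smul_eq_mul]
      simp [Fintype.card_fin]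
    rw [h1, hBl_apply, h1, h2, mul_div_assoc, div_self hqR, mul_one]
  -- positivity
  have hBpos : ∀ x : EuclideanSpace ℝ (Fin p), x ≠ 0 → 0 < Bl x x := by
    intro x hx
    have hFx : F x ≠ 0 := by
      intro h
      exact hx (hinj (by rw [h, map_zero]))
    rw [hBl_apply]
    apply div_pos _ (by positivity)
    have htr : Matrix.trace ((F x)ᵀ * F x) = ∑ i, ∑ j, (F x) j i * (F x) j i := by
      rw [Matrix.trace]
      refine Finset.sum_congr rfl fun i _ => ?_
      rw [Matrix.diag_apply, Matrix.mul_apply]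
      exact Finset.sum_congr rfl fun j _ => rfl
    rw [htr]
    obtain ⟨a, b, hab⟩ : ∃ a b, (F x) a b ≠ 0 := by
      by_contra h
      push_neg at h
      exact hFx (by ext a b; exact h a b)
    refine Finset.sum_pos' (fun i _ => Finset.sum_nonneg fun j _ => mul_self_nonneg _) ?_
    refine ⟨b, Finset.mem_univ _, ?_⟩
    refine Finset.sum_pos' (fun j _ => mul_self_nonneg _) ⟨a, Finset.mem_univ _, ?_⟩
    exact mul_self_pos.mpr hab
  -- matrix of the form
  set M : Matrix (Fin p) (Fin p) ℝ :=
    Matrix.of (fun k l => Bl (EuclideanSpace.single k 1) (EuclideanSpace.single l 1)) with hM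
  have hBM : ∀ x y : EuclideanSpace ℝ (Fin p), Bl x y = x ⬝ᵥ (M *ᵥ y) :=
    fun x y => bilin_eq_matrix Bl x y
  have hBsymm : ∀ x y, Bl x y = Bl y x := by
    intro x y
    rw [hBl_apply, hBl_apply]
    congr 1
    rw [← Matrix.trace_transpose ((F x)ᵀ * F y), Matrix.transpose_mul,
      Matrix.transpose_transpose]
  have hMposdef : M.PosDef := by
    refine Matrix.posDef_iff_dotProduct_mulVec.mpr ⟨?_, ?_⟩
    · rw [Matrix.IsHermitian, Matrix.conjTranspose_eq_transpose_of_trivial]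
      ext k l
      exact hBsymm (EuclideanSpace.single l 1) (EuclideanSpace.single k 1)
    · intro z hz
      have hsz : star z = z := funext fun i => star_trivial _
      rw [hsz]
      have h0 := hBpos (WithLp.toLp 2 z) (fun h => hz (by simpa using congrArg WithLp.ofLp h))
      rw [hBM] at h0
      exact h0
  have hdetS : IsUnit (CFC.sqrt M).det := by
    refine isUnit_iff_ne_zero.mpr fun h => ?_
    have : M.det = 0 := by
      rw [← CFC.sqrt_mul_sqrt_self M hMposdef.posSemidef.nonneg, Matrix.det_mul, h, mul_zero]
    exact ((Matrix.isUnit_iff_isUnit_det M).mp hMposdef.isUnit).ne_zero this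
  set S : Matrix (Fin p) (Fin p) ℝ := CFC.sqrt M with hS
  have hS2 : S * S = M := CFC.sqrt_mul_sqrt_self M hMposdef.posSemidef.nonneg
  have hSsymm : Sᵀ = S := by
    have h := (CFC.sqrt_nonneg M).posSemidef.1
    rw [Matrix.IsHermitian, Matrix.conjTranspose_eq_transpose_of_trivial] at h
    exact h
  have hSinv : S * S⁻¹ = 1 := Matrix.mul_nonsing_inv S hdetS
  -- linear map T
  set Tl : EuclideanSpace ℝ (Fin p) →ₗ[ℝ] EuclideanSpace ℝ (Fin p) :=
    { toFun := fun x => WithLp.toLp 2 (S⁻¹ *ᵥ x)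
      map_add' := fun a b => by simp [Matrix.mulVec_add]
      map_smul' := fun c a => by
        simp [Matrix.mulVec_smul] } with hTl
  have hT : ∀ x : EuclideanSpace ℝ (Fin p), Bl (Tl x) (Tl x) = x ⬝ᵥ x := by
    intro x
    rw [hBM]
    show (S⁻¹ *ᵥ x) ⬝ᵥ (M *ᵥ (S⁻¹ *ᵥ x)) = x ⬝ᵥ x
    rw [Matrix.mulVec_mulVec, ← hS2, Matrix.mul_assoc, hSinv, Matrix.mul_one]
    rw [Matrix.dotProduct_mulVec, ← Matrix.mulVec_transpose, hSsymm,
      Matrix.mulVec_mulVec, hSinv, Matrix.one_mulVec]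
  -- the bilinear map f
  set fb : EuclideanSpace ℝ (Fin (p+1)) →ₗ[ℝ]
      EuclideanSpace ℝ (Fin q) →ₗ[ℝ] EuclideanSpace ℝ (Fin q) :=
    LinearMap.mk₂ ℝ
      (fun v w => mvE (F (Tl (proj' p v))) w + v (Fin.last p) • w)
      (fun v v' w => by
        simp only [_root_.map_add, mvE_add_mat, PiLp.add_apply, add_smul]
        abel)
      (fun c v w => by
        simp only [_root_.map_smul, mvE_smul_mat, PiLp.smul_apply,
          smul_eq_mul, mul_smul, smul_add])
      (fun v w w' => by
        simp only [mvE_add, smul_add]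
        abel)
      (fun c v w => by
        simp only [mvE_smul, smul_add]
        rw [smul_comm]) with hfb
  refine ⟨fb, fun v w => ?_⟩
  have hfb_apply : fb v w = mvE (F (Tl (proj' p v))) w + v (Fin.last p) • w := rfl
  have hip : ∀ (a b : EuclideanSpace ℝ (Fin q)), ⟪a,b⟫ = (a : Fin q → ℝ) ⬝ᵥ b := by
    intro a b
    rw [euclid_inner]
    rfl
  set A := F (Tl (proj' p v)) with hA
  set t := v (Fin.last p) with htdef
  have hskewA : Aᵀ = -A := (hprop _).1
  have hcross : ((A *ᵥ w) ⬝ᵥ (w : Fin q → ℝ)) = 0 := by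
    have h1 : (A *ᵥ w) ⬝ᵥ (w : Fin q → ℝ) = (Aᵀ *ᵥ w) ⬝ᵥ w := by
      rw [dotProduct_comm, Matrix.dotProduct_mulVec, ← Matrix.mulVec_transpose]
    rw [hskewA, Matrix.neg_mulVec, neg_dotProduct] at h1
    linarith
  have hAA : (A *ᵥ (w : Fin q → ℝ)) ⬝ᵥ (A *ᵥ w)
      = ((proj' p v : EuclideanSpace ℝ (Fin p)) ⬝ᵥ (proj' p v : Fin p → ℝ)) * (w ⬝ᵥ w) := by
    rw [Matrix.dotProduct_mulVec, ← Matrix.mulVec_transpose, Matrix.mulVec_mulVec]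
    rw [hA, hQ, Matrix.smul_mulVec, Matrix.one_mulVec, smul_dotProduct,
      smul_eq_mul, hT]
  have hsq1 : ‖fb v w‖ ^ 2
      = ((proj' p v : Fin p → ℝ) ⬝ᵥ (proj' p v : Fin p → ℝ)) * (w ⬝ᵥ w)
        + t^2 * ((w : Fin q → ℝ) ⬝ᵥ w) := by
    rw [← real_inner_self_eq_norm_sq, hfb_apply]
    rw [real_inner_add_add_self]
    rw [real_inner_smul_right, real_inner_smul_left, real_inner_smul_right]
    rw [hip, hip, hip]
    simp only [mvE, WithLp.ofLp_toLp]
    rw [hcross, hAA]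
    ring
  have hv : ‖v‖^2 = ((proj' p v : Fin p → ℝ) ⬝ᵥ (proj' p v : Fin p → ℝ)) + t^2 := by
    rw [← real_inner_self_eq_norm_sq, euclid_inner, Fin.sum_univ_castSucc]
    simp only [dotProduct]
    rw [htdef, pow_two]
    rfl
  have hw : ‖w‖^2 = (w : Fin q → ℝ) ⬝ᵥ w := by
    rw [← real_inner_self_eq_norm_sq, hip]
  have hfinal : ‖fb v w‖ ^ 2 = (‖v‖ * ‖w‖)^2 := by
    rw [hsq1, mul_pow, hv, hw]
    ring
  rw [← Real.sqrt_sq (norm_nonneg (fb v w)), hfinal,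
    Real.sqrt_sq (by positivity)]

/-- For positive `p, q`, there is a bilinear map
`f : ℝ^(p+1) × ℝ^q → ℝ^q` with `‖f(v,w)‖ = ‖v‖·‖w‖` iff there is an injective linear map
`F : ℝ^p → M(q,ℝ)` whose image consists of skew-symmetric matrices that are real scalar
multiples of orthogonal matrices. -/
theorem stmt_9 (p q : ℕ) (hp : 0 < p) (hq : 0 < q) :
    (∃ f : EuclideanSpace ℝ (Fin (p + 1)) →ₗ[ℝ]
            EuclideanSpace ℝ (Fin q) →ₗ[ℝ] EuclideanSpace ℝ (Fin q),
        ∀ v w, ‖f v w‖ = ‖v‖ * ‖w‖) ↔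
    (∃ F : EuclideanSpace ℝ (Fin p) →ₗ[ℝ] Matrix (Fin q) (Fin q) ℝ,
        Function.Injective F ∧
        ∀ x, (F x)ᵀ = -(F x) ∧
          ∃ c : ℝ, ∃ A : Matrix (Fin q) (Fin q) ℝ, Aᵀ * A = 1 ∧ F x = c • A) := by
  constructor
  · rintro ⟨f, hf⟩
    exact fwd p q hq f hf
  · rintro ⟨F, hinj, hprop⟩
    exact bwd p q hq F hinj hprop
end
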